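/- arXiv:2206.04346 — 6 statements merged into one kernel-verified Lean document; each statement's English description precedes it below -/
import Mathlib

section
/- (Frostman's identity) Let z_1, ..., z_n ∈ 𝔻 and let B(z) = η ∏_{j=1}^n (z_j − z)/(1 − conj(z_j) z) with |η| = 1. Then for every z ∈ ℂ with |z| ≠ 1 and conj(z_k) z ≠ 1 for all k, one has (1 − |B(z)|²)/(1 − |z|²) = Σ_{k=1}^n ( ∏_{j=1}^{k−1} |(z − z_j)/(1 − conj(z_j) z)|² ) · (1 − |z_k|²)/|1 − conj(z_k) z|². -/
open Metric Finset

lemma telescope (g : ℕ → ℝ) (n : ℕ) :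
    1 - ∏ j ∈ Finset.range n, g j =
      ∑ k ∈ Finset.range n, (∏ j ∈ Finset.range k, g j) * (1 - g k) := by
  induction n with
  | zero => simp
  | succ n ih => rw [Finset.sum_range_succ, ← ih, Finset.prod_range_succ]; ring

lemma key (a z : ℂ) :
    ‖1 - (starRingEnd ℂ) a * z‖ ^ 2 - ‖z - a‖ ^ 2 = (1 - ‖a‖ ^ 2) * (1 - ‖z‖ ^ 2) := by
  simp only [Complex.sq_norm, Complex.normSq_apply,
    Complex.sub_re, Complex.sub_im, Complex.one_re, Complex.one_im, Complex.mul_re,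
    Complex.mul_im, Complex.conj_re, Complex.conj_im]
  ring

/-- **Frostman's identity.** For a finite Blaschke product
`B(z) = η ∏_j (a j − z)/(1 − conj (a j) · z)` with `|η| = 1` and `a j` in the open
unit disk, and any `z` with `|z| ≠ 1` and `conj (a k) · z ≠ 1` for all `k`, one has
`(1 − |B(z)|²)/(1 − |z|²) = Σ_k (∏_{j<k} |(z − a j)/(1 − conj (a j) z)|²) ·
(1 − |a k|²)/|1 − conj (a k) z|²`. -/
theorem frostman_identity (n : ℕ) (η : ℂ) (a : Fin n → ℂ)
    (hη : ‖η‖ = 1) (ha : ∀ j, ‖a j‖ < 1)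
    (B : ℂ → ℂ)
    (hB : ∀ z, B z = η * ∏ j, (a j - z) / (1 - (starRingEnd ℂ) (a j) * z))
    (z : ℂ) (hz : ‖z‖ ≠ 1) (hz' : ∀ k, (starRingEnd ℂ) (a k) * z ≠ 1) :
    (1 - ‖B z‖ ^ 2) / (1 - ‖z‖ ^ 2) =
      ∑ k : Fin n,
        (∏ j ∈ Finset.Iio k, ‖(z - a j) / (1 - (starRingEnd ℂ) (a j) * z)‖ ^ 2) *
          ((1 - ‖a k‖ ^ 2) / ‖1 - (starRingEnd ℂ) (a k) * z‖ ^ 2) := by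
  set f : Fin n → ℝ := fun j => ‖(z - a j) / (1 - (starRingEnd ℂ) (a j) * z)‖ ^ 2 with hf
  have hd : ∀ k, (1 : ℂ) - (starRingEnd ℂ) (a k) * z ≠ 0 := fun k =>
    sub_ne_zero.mpr fun h => hz' k h.symm
  have hdn : ∀ k, ‖(1 : ℂ) - (starRingEnd ℂ) (a k) * z‖ ^ 2 ≠ 0 := fun k =>
    pow_ne_zero _ (norm_ne_zero_iff.mpr (hd k))
  have hz2 : (1 : ℝ) - ‖z‖ ^ 2 ≠ 0 := by
    intro h
    apply hz
    have h2 : (‖z‖ - 1) * (‖z‖ + 1) = 0 := by nlinarith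
    rcases mul_eq_zero.mp h2 with h3 | h3
    · linarith
    · nlinarith [norm_nonneg z]
  have hBz : ‖B z‖ ^ 2 = ∏ j, f j := by
    rw [hB, norm_mul, hη, one_mul, norm_prod, ← Finset.prod_pow]
    exact Finset.prod_congr rfl fun j _ => by simp [hf, norm_div, norm_sub_rev]
  have hfk : ∀ k, 1 - f k = (1 - ‖a k‖ ^ 2) * (1 - ‖z‖ ^ 2) / ‖1 - (starRingEnd ℂ) (a k) * z‖ ^ 2 := by
    intro k
    simp only [hf]
    rw [norm_div, div_pow, ← key (a k) z, sub_div, div_self (hdn k)]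
  set g : ℕ → ℝ := fun m => if h : m < n then f ⟨m, h⟩ else 1 with hg
  have hIio : ∀ k : Fin n, ∏ j ∈ Finset.Iio k, f j = ∏ m ∈ Finset.range (k : ℕ), g m := by
    intro k
    rw [← Nat.Iio_eq_range, ← Fin.map_valEmbedding_Iio, Finset.prod_map]
    exact Finset.prod_congr rfl fun j _ => by simp [hg, j.isLt]
  calc (1 - ‖B z‖ ^ 2) / (1 - ‖z‖ ^ 2)
      = (∑ m ∈ Finset.range n, (∏ j ∈ Finset.range m, g j) * (1 - g m)) / (1 - ‖z‖ ^ 2) := by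
        rw [hBz, ← telescope g n]
        congr 2
        rw [show (∏ j, f j) = ∏ j : Fin n, g ↑j from
          Finset.prod_congr rfl fun j _ => by simp [hg, j.isLt],
          Fin.prod_univ_eq_prod_range (fun m => g m) n]
    _ = ∑ k : Fin n, (∏ j ∈ Finset.Iio k, f j) *
          ((1 - ‖a k‖ ^ 2) / ‖1 - (starRingEnd ℂ) (a k) * z‖ ^ 2) := by
        rw [Finset.sum_div, ← Fin.sum_univ_eq_sum_range
          (fun m => (∏ j ∈ Finset.range m, g j) * (1 - g m) / (1 - ‖z‖ ^ 2)) n]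
        refine Finset.sum_congr rfl fun k _ => ?_
        rw [hIio k]
        have : g (k : ℕ) = f k := by simp [hg, k.isLt]
        rw [this, hfk k, mul_div_assoc]
        congr 1
        rw [div_div, mul_comm (‖1 - (starRingEnd ℂ) (a k) * z‖ ^ 2), ← div_div,
          mul_div_assoc, div_self hz2, mul_one]
end

section
/- For every finite Blaschke product B, the hyperbolic derivative of B tends to 1 at the boundary: lim_{|z| → 1⁻} (1 − |z|²) |B'(z)| / (1 − |B(z)|²) = 1. -/
open Metric Filter

namespace BlaschkeHypDeriv
open Complex Finset

lemma normSq_key (a z : ℂ) :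
    normSq (1 - (starRingEnd ℂ) a * z) - normSq (a - z) = (1 - normSq a) * (1 - normSq z) := by
  simp [Complex.normSq_apply, Complex.sub_re, Complex.sub_im, Complex.mul_re, Complex.mul_im,
    Complex.conj_re, Complex.conj_im, Complex.one_re, Complex.one_im]
  ring

lemma den_ne (a z : ℂ) (h : ‖a‖ * ‖z‖ < 1) : 1 - (starRingEnd ℂ) a * z ≠ 0 := by
  intro h0
  have : (starRingEnd ℂ) a * z = 1 := by linear_combination -h0
  have := congrArg norm this
  simp only [norm_mul, norm_one, RCLike.norm_conj] at this
  rw [this] at h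
  linarith

lemma hasDerivAt_blaschke (a z : ℂ) (h : 1 - (starRingEnd ℂ) a * z ≠ 0) :
    HasDerivAt (fun w => (a - w) / (1 - (starRingEnd ℂ) a * w))
      (((normSq a : ℂ) - 1) / (1 - (starRingEnd ℂ) a * z) ^ 2) z := by
  have h1 : HasDerivAt (fun w : ℂ => a - w) (-1) z := by
    simpa using (hasDerivAt_id z).const_sub a
  have h2 : HasDerivAt (fun w : ℂ => 1 - (starRingEnd ℂ) a * w) (-((starRingEnd ℂ) a)) z := by
    simpa using ((hasDerivAt_id z).const_mul ((starRingEnd ℂ) a)).const_sub 1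
  have := h1.div h2 h
  refine this.congr_deriv ?_
  have hc : (starRingEnd ℂ) a * a = (normSq a : ℂ) := by
    rw [mul_comm, Complex.mul_conj]
  rw [div_left_inj' (pow_ne_zero 2 h)]
  linear_combination hc

lemma weier {ι : Type*} (s : Finset ι) (x : ι → ℝ) (h0 : ∀ i ∈ s, 0 ≤ x i)
    (h1 : ∀ i ∈ s, x i ≤ 1) :
    1 - ∑ i ∈ s, (1 - x i) ≤ ∏ i ∈ s, x i ∧
    1 - ∏ i ∈ s, x i ≤ ∑ i ∈ s, (1 - x i) ∧
    (∑ i ∈ s, (1 - x i)) * ∏ i ∈ s, x i ≤ 1 - ∏ i ∈ s, x i := by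
  induction s using Finset.cons_induction with
  | empty => simp
  | cons a s ha IH =>
    obtain ⟨i1, i2, i3⟩ := IH (fun i hi => h0 i (Finset.mem_cons_of_mem hi))
      (fun i hi => h1 i (Finset.mem_cons_of_mem hi))
    have hq0 : 0 ≤ x a := h0 a (Finset.mem_cons_self ..)
    have hq1 : x a ≤ 1 := h1 a (Finset.mem_cons_self ..)
    have hP0 : 0 ≤ ∏ i ∈ s, x i :=
      Finset.prod_nonneg (fun i hi => h0 i (Finset.mem_cons_of_mem hi))
    have hP1 : ∏ i ∈ s, x i ≤ 1 :=
      Finset.prod_le_one (fun i hi => h0 i (Finset.mem_cons_of_mem hi))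
        (fun i hi => h1 i (Finset.mem_cons_of_mem hi))
    have hS0 : 0 ≤ ∑ i ∈ s, (1 - x i) :=
      Finset.sum_nonneg (fun i hi => by linarith [h1 i (Finset.mem_cons_of_mem hi)])
    rw [Finset.prod_cons, Finset.sum_cons]
    refine ⟨by nlinarith, by nlinarith, by
      nlinarith [mul_le_mul_of_nonneg_left i3 hq0,
        mul_nonneg (sub_nonneg.2 hq1) (sub_nonneg.2 hP1),
        mul_nonneg (mul_nonneg hS0 hP0) (sub_nonneg.2 hq1)]⟩


lemma hns (w : ℂ) : normSq w = ‖w‖ ^ 2 := by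
  rw [Complex.normSq_eq_norm_sq]

lemma blaschke_term_key (a z : ℂ) (h : 1 - (starRingEnd ℂ) a * z ≠ 0) :
    (((normSq a : ℂ) - 1) / (1 - (starRingEnd ℂ) a * z) ^ 2)
        * (starRingEnd ℂ) ((a - z) / (1 - (starRingEnd ℂ) a * z))
      = (((1 - normSq a) / normSq (1 - (starRingEnd ℂ) a * z) : ℝ) : ℂ) *
        ((starRingEnd ℂ) z
          + (starRingEnd ℂ) a * (((‖z‖ ^ 2 - 1 : ℝ)) : ℂ) / (1 - (starRingEnd ℂ) a * z)) := by
  have h2 : (starRingEnd ℂ) (1 - (starRingEnd ℂ) a * z) ≠ 0 := by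
    rw [starRingEnd_apply]; exact star_ne_zero.mpr h
  have hn : ((normSq (1 - (starRingEnd ℂ) a * z) : ℝ) : ℂ)
      = (1 - (starRingEnd ℂ) a * z) * (starRingEnd ℂ) (1 - (starRingEnd ℂ) a * z) :=
    (Complex.mul_conj _).symm
  have hna : ((normSq a : ℝ) : ℂ) = a * (starRingEnd ℂ) a := (Complex.mul_conj _).symm
  have hz2 : ((‖z‖ : ℝ) : ℂ) ^ 2 = z * (starRingEnd ℂ) z := by
    rw [show (((‖z‖ : ℝ) : ℂ)) ^ 2 = ((‖z‖ ^ 2 : ℝ) : ℂ) by push_cast; ring, ← hns]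
    exact (Complex.mul_conj _).symm
  push_cast
  rw [hn, hna, hz2, map_div₀, map_sub]
  rw [show (starRingEnd ℂ) (1 - (starRingEnd ℂ) a * z)
      = 1 - a * (starRingEnd ℂ) z by rw [map_sub, map_one, map_mul, Complex.conj_conj]]
  have h2' : 1 - a * (starRingEnd ℂ) z ≠ 0 := by
    rw [show (1 : ℂ) - a * (starRingEnd ℂ) z = (starRingEnd ℂ) (1 - (starRingEnd ℂ) a * z) by
      rw [map_sub, map_one, map_mul, Complex.conj_conj]]
    exact h2
  field_simp
  ring

set_option maxHeartbeats 2000000 in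
lemma pointwise (n : ℕ) (η : ℂ) (a : Fin (n+1) → ℂ) (hη : ‖η‖ = 1)
    (B : ℂ → ℂ)
    (hB : ∀ z, B z = η * ∏ j, (a j - z) / (1 - (starRingEnd ℂ) (a j) * z))
    (M : ℝ) (hM : M = ∑ j, (1 + ‖a j‖) / (1 - ‖a j‖))
    (z : ℂ) (h1 : ∀ j, ‖a j‖ < ‖z‖) (h2 : ‖z‖ < 1)
    (h3 : (1 - ‖z‖ ^ 2) * M ≤ 1/2) (h4 : (1 - ‖z‖ ^ 2) * M ≤ ‖z‖) :
    (‖z‖ - (1 - ‖z‖ ^ 2) * M) * (1 - (1 - ‖z‖ ^ 2) * M)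
      ≤ (1 - ‖z‖ ^ 2) * ‖deriv B z‖ / (1 - ‖B z‖ ^ 2) ∧
    (1 - ‖z‖ ^ 2) * ‖deriv B z‖ / (1 - ‖B z‖ ^ 2) ≤ 1 / (1 - (1 - ‖z‖ ^ 2) * M) := by
  have hz1 : 0 < ‖z‖ := lt_of_le_of_lt (norm_nonneg _) (h1 0)
  have ha : ∀ j, ‖a j‖ < 1 := fun j => (h1 j).trans h2
  have ha0 : ∀ j, 0 ≤ ‖a j‖ := fun j => norm_nonneg _
  set c : Fin (n+1) → ℂ := fun j => 1 - (starRingEnd ℂ) (a j) * z with hc_def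
  set b : Fin (n+1) → ℂ := fun j => (a j - z) / c j with hb_def
  set d : Fin (n+1) → ℝ := fun j => (1 - normSq (a j)) / normSq (c j) with hd_def
  have hcne : ∀ j, c j ≠ 0 := fun j => den_ne (a j) z (by nlinarith [ha j, ha0 j])
  have hbne : ∀ j, b j ≠ 0 := by
    intro j
    apply div_ne_zero _ (hcne j)
    intro h0
    have heq : a j = z := by linear_combination h0
    have h' := h1 j
    rw [heq] at h'
    exact lt_irrefl _ h'
  have hc_lb : ∀ j, 1 - ‖a j‖ ≤ ‖c j‖ := by
    intro j
    have := norm_sub_norm_le (1 : ℂ) ((starRingEnd ℂ) (a j) * z)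
    simp only [norm_one, norm_mul, RCLike.norm_conj] at this
    nlinarith [ha0 j]
  have hcsq : ∀ j, (1 - ‖a j‖) ^ 2 ≤ normSq (c j) := by
    intro j
    rw [hns]
    have := hc_lb j
    nlinarith [ha j]
  have hcpos : ∀ j, 0 < normSq (c j) := fun j => normSq_pos.2 (hcne j)
  have hd_pos : ∀ j, 0 < d j := by
    intro j
    apply div_pos _ (hcpos j)
    rw [hns]
    nlinarith [ha j, ha0 j]
  have hd_le : ∀ j, d j ≤ (1 + ‖a j‖) / (1 - ‖a j‖) := by
    intro j
    rw [hd_def]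
    rw [div_le_div_iff₀ (hcpos j) (by linarith [ha j])]
    rw [hns]
    nlinarith [hcsq j, ha j, ha0 j, hcpos j]
  have hMj : ∀ j, (1 + ‖a j‖) / (1 - ‖a j‖) ≤ M := by
    intro j
    rw [hM]
    have hnn : ∀ i ∈ (univ : Finset (Fin (n+1))), 0 ≤ (1 + ‖a i‖) / (1 - ‖a i‖) := by
      intro i _
      have := ha i; have := ha0 i
      apply div_nonneg <;> linarith
    exact Finset.single_le_sum hnn (mem_univ j)
  have hM_pos : 0 < M := lt_of_lt_of_le
    (div_pos (by linarith [ha0 0]) (by linarith [ha 0])) (hMj 0)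
  have ht2 : 0 < 1 - ‖z‖ ^ 2 := by nlinarith
  have hd_sum : ∑ j, d j ≤ M := by
    rw [hM]; exact Finset.sum_le_sum fun j _ => hd_le j
  -- normSq of the factors
  have hx : ∀ j, normSq (b j) = 1 - (1 - ‖z‖ ^ 2) * d j := by
    intro j
    have hkey := normSq_key (a j) z
    rw [hns z] at hkey
    have hcj : normSq (c j) ≠ 0 := (hcpos j).ne'
    rw [hb_def]
    simp only
    rw [Complex.normSq_div, hd_def]
    simp only
    field_simp
    linear_combination -hkey
  have hx_pos : ∀ j, 0 < normSq (b j) := fun j => normSq_pos.2 (hbne j)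
  have hx_le : ∀ j, normSq (b j) ≤ 1 := by
    intro j
    rw [hx j]
    nlinarith [hd_pos j]
  have hb_le : ∀ j, ‖b j‖ ≤ 1 := by
    intro j
    have := hx_le j
    rw [hns] at this
    nlinarith [norm_nonneg (b j)]
  obtain ⟨w1, w2, w3⟩ := weier univ (fun j => normSq (b j))
    (fun j _ => (hx_pos j).le) (fun j _ => hx_le j)
  set X : ℝ := ∏ j, normSq (b j) with hX_def
  set E : ℝ := ∑ j, (1 - normSq (b j)) with hE_def
  have hX_pos : 0 < X := Finset.prod_pos fun j _ => hx_pos j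
  have hX_le1 : X ≤ 1 := Finset.prod_le_one (fun j _ => (hx_pos j).le) (fun j _ => hx_le j)
  have hE_eq : E = (1 - ‖z‖ ^ 2) * ∑ j, d j := by
    rw [hE_def, Finset.mul_sum]
    exact Finset.sum_congr rfl fun j _ => by rw [hx j]; ring
  have hE_pos : 0 < E := by
    rw [hE_eq]
    exact mul_pos ht2 (Finset.sum_pos (fun j _ => hd_pos j) univ_nonempty)
  have hE_le : E ≤ (1 - ‖z‖ ^ 2) * M := by
    rw [hE_eq]
    exact mul_le_mul_of_nonneg_left hd_sum ht2.le
  have hBnorm : ‖B z‖ ^ 2 = X := by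
    rw [hB z, norm_mul, hη, one_mul, norm_prod, ← Finset.prod_pow]
    exact Finset.prod_congr rfl fun j _ => (hns (b j)).symm
  -- derivative of B
  have hDB : HasDerivAt B
      (η * ∑ j, (∏ k ∈ univ.erase j, b k) * (((normSq (a j) : ℂ) - 1) / (c j) ^ 2)) z := by
    have hfun : B = fun w => η * ∏ j, (a j - w) / (1 - (starRingEnd ℂ) (a j) * w) := funext hB
    rw [hfun]
    exact ((HasDerivAt.fun_finsetProd
      (fun j (_ : j ∈ univ) => hasDerivAt_blaschke (a j) z (hcne j)))).const_mul η
  have hderiv : deriv B z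
      = η * ∑ j, (∏ k ∈ univ.erase j, b k) * (((normSq (a j) : ℂ) - 1) / (c j) ^ 2) := hDB.deriv
  have hb'_norm : ∀ j, ‖((normSq (a j) : ℂ) - 1) / (c j) ^ 2‖ = d j := by
    intro j
    rw [norm_div, norm_pow,
      show ((normSq (a j) : ℂ) - 1) = ((normSq (a j) - 1 : ℝ) : ℂ) by push_cast; ring,
      Complex.norm_real, Real.norm_eq_abs,
      abs_of_nonpos (by nlinarith [hns (a j) ▸ (by nlinarith [ha j, ha0 j] : ‖a j‖ ^ 2 < 1)]),
      ← hns (c j), hd_def]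
    ring
  have hupper : ‖deriv B z‖ ≤ ∑ j, d j := by
    rw [hderiv, norm_mul, hη, one_mul]
    refine le_trans (norm_sum_le _ _) (Finset.sum_le_sum ?_)
    intro j _
    rw [norm_mul, hb'_norm j]
    have hprod : ‖∏ k ∈ univ.erase j, b k‖ ≤ 1 := by
      rw [norm_prod]
      exact Finset.prod_le_one (fun k _ => norm_nonneg _) (fun k _ => hb_le k)
    nlinarith [hd_pos j, norm_nonneg (∏ k ∈ univ.erase j, b k)]
  set p : Fin (n+1) → ℝ := fun j => ∏ k ∈ univ.erase j, normSq (b k) with hp_def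
  have hp_pos : ∀ j, 0 < p j := fun j => Finset.prod_pos fun k _ => hx_pos k
  have hpX : ∀ j, X ≤ p j := by
    intro j
    have hmul : normSq (b j) * p j = X := by
      rw [hX_def, hp_def]
      simp only
      exact Finset.mul_prod_erase univ (fun k => normSq (b k)) (mem_univ j)
    calc X = normSq (b j) * p j := hmul.symm
      _ ≤ 1 * p j := mul_le_mul_of_nonneg_right (hx_le j) (hp_pos j).le
      _ = p j := one_mul _
  set e : Fin (n+1) → ℂ :=
    fun j => (starRingEnd ℂ) (a j) * (((‖z‖ ^ 2 - 1 : ℝ)) : ℂ) / c j with he_def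
  have he_norm : ∀ j, ‖e j‖ ≤ (1 - ‖z‖ ^ 2) * M := by
    intro j
    rw [he_def]
    simp only
    rw [norm_div, norm_mul, RCLike.norm_conj, Complex.norm_real, Real.norm_eq_abs,
      abs_of_nonpos (by nlinarith)]
    have hc0 : 0 < ‖c j‖ := by linarith [hc_lb j, ha j]
    rw [div_le_iff₀ hc0]
    have hq : (1 + ‖a j‖) / (1 - ‖a j‖) * (1 - ‖a j‖) = 1 + ‖a j‖ :=
      div_mul_cancel₀ _ (by linarith [ha j])
    nlinarith [mul_le_mul (hMj j) (hc_lb j) (by linarith [ha j]) hM_pos.le, ht2, ha0 j]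
  have hkeyc : ∀ j, (((normSq (a j) : ℂ) - 1) / (c j) ^ 2) * (starRingEnd ℂ) (b j)
      = ((d j : ℝ) : ℂ) * ((starRingEnd ℂ) z + e j) :=
    fun j => blaschke_term_key (a j) z (hcne j)
  have hηη : η * (starRingEnd ℂ) η = 1 := by
    rw [Complex.mul_conj, show normSq η = 1 by rw [hns, hη]; norm_num]
    norm_num
  have hBconj : deriv B z * (starRingEnd ℂ) (B z)
      = ∑ j, ((d j * p j : ℝ) : ℂ) * ((starRingEnd ℂ) z + e j) := by
    rw [hderiv, hB z, map_mul, map_prod, mul_mul_mul_comm, hηη, one_mul, Finset.sum_mul]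
    refine Finset.sum_congr rfl fun j _ => ?_
    rw [show ∏ k, (starRingEnd ℂ) (b k)
        = (starRingEnd ℂ) (b j) * ∏ k ∈ univ.erase j, (starRingEnd ℂ) (b k) from
      (Finset.mul_prod_erase univ _ (mem_univ j)).symm]
    have hpp : (∏ k ∈ univ.erase j, b k) * ∏ k ∈ univ.erase j, (starRingEnd ℂ) (b k)
        = ((p j : ℝ) : ℂ) := by
      rw [← Finset.prod_mul_distrib, hp_def]
      push_cast
      exact Finset.prod_congr rfl fun k _ => Complex.mul_conj _
    calc (∏ k ∈ univ.erase j, b k) * (((normSq (a j) : ℂ) - 1) / (c j) ^ 2)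
          * ((starRingEnd ℂ) (b j) * ∏ k ∈ univ.erase j, (starRingEnd ℂ) (b k))
        = ((((normSq (a j) : ℂ) - 1) / (c j) ^ 2) * (starRingEnd ℂ) (b j))
          * ((∏ k ∈ univ.erase j, b k) * ∏ k ∈ univ.erase j, (starRingEnd ℂ) (b k)) := by ring
      _ = (((d j : ℝ) : ℂ) * ((starRingEnd ℂ) z + e j)) * ((p j : ℝ) : ℂ) := by
          rw [hkeyc j, hpp]
      _ = ((d j * p j : ℝ) : ℂ) * ((starRingEnd ℂ) z + e j) := by push_cast; ring
  set S : ℝ := ∑ j, d j * p j with hS_def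
  have hS_pos : 0 < S :=
    Finset.sum_pos (fun j _ => mul_pos (hd_pos j) (hp_pos j)) univ_nonempty
  have hsplit2 : deriv B z * (starRingEnd ℂ) (B z)
      = ((S : ℝ) : ℂ) * (starRingEnd ℂ) z + ∑ j, ((d j * p j : ℝ) : ℂ) * e j := by
    rw [hBconj, hS_def]
    push_cast
    rw [Finset.sum_mul, ← Finset.sum_add_distrib]
    exact Finset.sum_congr rfl fun j _ => by ring
  have hnorm1 : ‖deriv B z * (starRingEnd ℂ) (B z)‖ = ‖deriv B z‖ * ‖B z‖ := by
    rw [norm_mul, RCLike.norm_conj]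
  have hsum_norm : ‖∑ j, ((d j * p j : ℝ) : ℂ) * e j‖ ≤ S * ((1 - ‖z‖ ^ 2) * M) := by
    refine le_trans (norm_sum_le _ _) ?_
    rw [hS_def, Finset.sum_mul]
    refine Finset.sum_le_sum fun j _ => ?_
    rw [norm_mul, Complex.norm_real, Real.norm_eq_abs,
      _root_.abs_of_nonneg (mul_pos (hd_pos j) (hp_pos j)).le]
    exact mul_le_mul_of_nonneg_left (he_norm j) (mul_pos (hd_pos j) (hp_pos j)).le
  have hSz : ‖((S : ℝ) : ℂ) * (starRingEnd ℂ) z‖ = S * ‖z‖ := by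
    rw [norm_mul, Complex.norm_real, RCLike.norm_conj, Real.norm_eq_abs,
      _root_.abs_of_nonneg hS_pos.le]
  have hlow : S * (‖z‖ - (1 - ‖z‖ ^ 2) * M) ≤ ‖deriv B z‖ * ‖B z‖ := by
    have htri : ‖((S : ℝ) : ℂ) * (starRingEnd ℂ) z‖
        ≤ ‖deriv B z * (starRingEnd ℂ) (B z)‖ + ‖∑ j, ((d j * p j : ℝ) : ℂ) * e j‖ := by
      rw [hsplit2]
      have := norm_sub_le
        (((S : ℝ) : ℂ) * (starRingEnd ℂ) z + ∑ j, ((d j * p j : ℝ) : ℂ) * e j)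
        (∑ j, ((d j * p j : ℝ) : ℂ) * e j)
      simpa using this
    rw [hnorm1] at htri
    rw [hSz] at htri
    nlinarith [hsum_norm]
  have hS_lb : (∑ j, d j) * X ≤ S := by
    rw [hS_def, Finset.sum_mul]
    exact Finset.sum_le_sum fun j _ => mul_le_mul_of_nonneg_left (hpX j) (hd_pos j).le
  -- final assembly
  have hY : ‖B z‖ ≤ 1 := by nlinarith [hBnorm, hX_le1, norm_nonneg (B z)]
  have hY0 : 0 ≤ ‖B z‖ := norm_nonneg _
  have hA_pos : 0 < 1 - X := lt_of_lt_of_le (mul_pos hE_pos hX_pos) w3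
  have hN0 : 0 ≤ (1 - ‖z‖ ^ 2) * ‖deriv B z‖ := mul_nonneg ht2.le (norm_nonneg _)
  have hN_le : (1 - ‖z‖ ^ 2) * ‖deriv B z‖ ≤ E := by
    have := mul_le_mul_of_nonneg_left hupper ht2.le
    rw [hE_eq]
    linarith
  have htK : 0 ≤ ‖z‖ - (1 - ‖z‖ ^ 2) * M := by linarith
  have hXK : 1 - (1 - ‖z‖ ^ 2) * M ≤ X := by linarith [w1, hE_le]
  have hNY : E * X * (‖z‖ - (1 - ‖z‖ ^ 2) * M)
      ≤ (1 - ‖z‖ ^ 2) * ‖deriv B z‖ * ‖B z‖ := by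
    have step1 : (1 - ‖z‖ ^ 2) * (S * (‖z‖ - (1 - ‖z‖ ^ 2) * M))
        ≤ (1 - ‖z‖ ^ 2) * (‖deriv B z‖ * ‖B z‖) := mul_le_mul_of_nonneg_left hlow ht2.le
    have step2 : E * X ≤ (1 - ‖z‖ ^ 2) * S := by
      have := mul_le_mul_of_nonneg_left hS_lb ht2.le
      rw [hE_eq]
      nlinarith
    nlinarith [mul_le_mul_of_nonneg_right step2 htK]
  rw [hBnorm]
  constructor
  · rw [le_div_iff₀ hA_pos]
    have key1 : (1 - (1 - ‖z‖ ^ 2) * M) * (1 - X) ≤ X * E := by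
      nlinarith [hXK, w2, hX_pos, hA_pos, hE_pos, hE_le]
    have key2 : (‖z‖ - (1 - ‖z‖ ^ 2) * M) * (X * E) ≤ (1 - ‖z‖ ^ 2) * ‖deriv B z‖ := by
      nlinarith [hNY, hY, hN0]
    nlinarith [mul_le_mul_of_nonneg_left key1 htK]
  · rw [div_le_div_iff₀ hA_pos (by linarith : (0:ℝ) < 1 - (1 - ‖z‖ ^ 2) * M)]
    nlinarith [hN_le, w3, hXK, hE_pos, hE_le, hX_pos]

end BlaschkeHypDeriv

open BlaschkeHypDeriv in
/-- **The hyperbolic derivative of a finite Blaschke product tends to `1` at the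
boundary.** For every (nonconstant) finite Blaschke product
`B(z) = η ∏_j (a j − z)/(1 − conj (a j) · z)` of degree `n + 1 ≥ 1`, one has
`(1 − |z|²)|B'(z)|/(1 − |B(z)|²) → 1` as `|z| → 1⁻`. -/
theorem blaschke_hyperbolic_deriv_boundary (n : ℕ) (η : ℂ) (a : Fin (n + 1) → ℂ)
    (hη : ‖η‖ = 1) (ha : ∀ j, ‖a j‖ < 1)
    (B : ℂ → ℂ)
    (hB : ∀ z, B z = η * ∏ j, (a j - z) / (1 - (starRingEnd ℂ) (a j) * z)) :
    Tendsto (fun z : ℂ => (1 - ‖z‖ ^ 2) * ‖deriv B z‖ / (1 - ‖B z‖ ^ 2))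
      (Filter.comap (fun z : ℂ => ‖z‖) (nhdsWithin 1 (Set.Iio 1))) (nhds 1) := by
  set M : ℝ := ∑ j, (1 + ‖a j‖) / (1 - ‖a j‖) with hM
  set l := Filter.comap (fun z : ℂ => ‖z‖) (nhdsWithin 1 (Set.Iio 1)) with hl
  have htc : Tendsto (fun z : ℂ => ‖z‖) l (nhdsWithin 1 (Set.Iio 1)) := tendsto_comap
  have htn : Tendsto (fun z : ℂ => ‖z‖) l (nhds 1) := htc.mono_right nhdsWithin_le_nhds
  have e1 : ∀ᶠ t in nhdsWithin (1:ℝ) (Set.Iio 1), ∀ j, ‖a j‖ < t :=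
    eventually_nhdsWithin_of_eventually_nhds
      (eventually_all.2 fun j => eventually_gt_nhds (ha j))
  have e2 : ∀ᶠ t in nhdsWithin (1:ℝ) (Set.Iio 1), t < 1 := self_mem_nhdsWithin
  have hcont : Tendsto (fun t : ℝ => (1 - t ^ 2) * M) (nhds 1) (nhds 0) := by
    have : Tendsto (fun t : ℝ => (1 - t ^ 2) * M) (nhds 1) (nhds ((1 - 1 ^ 2) * M)) :=
      (Continuous.tendsto (by fun_prop) 1)
    simpa using this
  have e3 : ∀ᶠ t in nhdsWithin (1:ℝ) (Set.Iio 1), (1 - t ^ 2) * M ≤ 1/2 :=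
    eventually_nhdsWithin_of_eventually_nhds
      ((hcont.eventually_lt_const (by norm_num : (0:ℝ) < 1/2)).mono fun t ht => ht.le)
  have e4 : ∀ᶠ t in nhdsWithin (1:ℝ) (Set.Iio 1), (1 - t ^ 2) * M ≤ t := by
    have hc2 : Tendsto (fun t : ℝ => t - (1 - t ^ 2) * M) (nhds 1) (nhds 1) := by
      have : Tendsto (fun t : ℝ => t - (1 - t ^ 2) * M) (nhds 1)
          (nhds (1 - (1 - 1 ^ 2) * M)) := (Continuous.tendsto (by fun_prop) 1)
      simpa using this
    exact eventually_nhdsWithin_of_eventually_nhds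
      ((hc2.eventually_const_lt (by norm_num : (0:ℝ) < 1)).mono fun t ht => by linarith)
  have hevt : ∀ᶠ t in nhdsWithin (1:ℝ) (Set.Iio 1), (∀ j, ‖a j‖ < t) ∧ t < 1 ∧
      (1 - t ^ 2) * M ≤ 1/2 ∧ (1 - t ^ 2) * M ≤ t := by
    filter_upwards [e1, e2, e3, e4] with t g1 g2 g3 g4
    exact ⟨g1, g2, g3, g4⟩
  have hev : ∀ᶠ z in l, (∀ j, ‖a j‖ < ‖z‖) ∧ ‖z‖ < 1 ∧
      (1 - ‖z‖ ^ 2) * M ≤ 1/2 ∧ (1 - ‖z‖ ^ 2) * M ≤ ‖z‖ := htc.eventually hevt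
  have hbound := hev.mono fun z hz =>
    pointwise n η a hη B hB M hM z hz.1 hz.2.1 hz.2.2.1 hz.2.2.2
  have hlo : Tendsto (fun z : ℂ => (‖z‖ - (1 - ‖z‖ ^ 2) * M) * (1 - (1 - ‖z‖ ^ 2) * M))
      l (nhds 1) := by
    have hg : Tendsto (fun t : ℝ => (t - (1 - t ^ 2) * M) * (1 - (1 - t ^ 2) * M)) (nhds 1)
        (nhds ((1 - (1 - 1 ^ 2) * M) * (1 - (1 - 1 ^ 2) * M))) :=
      Continuous.tendsto (by fun_prop) 1
    have := hg.comp htn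
    simpa [Function.comp_def] using this
  have hhi : Tendsto (fun z : ℂ => 1 / (1 - (1 - ‖z‖ ^ 2) * M)) l (nhds 1) := by
    have hg : Tendsto (fun t : ℝ => 1 / (1 - (1 - t ^ 2) * M)) (nhds 1)
        (nhds (1 / (1 - (1 - 1 ^ 2) * M))) := by
      apply Tendsto.div tendsto_const_nhds (Continuous.tendsto (by fun_prop) 1)
      norm_num
    have := hg.comp htn
    simpa [Function.comp_def] using this
  exact tendsto_of_tendsto_of_tendsto_of_le_of_le' hlo hhi
    (hbound.mono fun z h => h.1) (hbound.mono fun z h => h.2)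
end

section
/- (Critical sets are Bergman zero sets) Let f be a nonconstant holomorphic function from the open unit disk 𝔻 into the closed unit disk. Then there exists a holomorphic function φ : 𝔻 → ℂ, not identically zero, belonging to the Bergman space A²₁ (i.e. ∬_𝔻 (1 − |z|²) |φ(z)|² dx dy < ∞), such that for every z ∈ 𝔻 the order of vanishing of φ at z equals the order of vanishing of f' at z. -/
open Metric Filter MeasureTheory
open scoped ENNReal NNReal

/-- The order of vanishing of `f` at `z`. -/
noncomputable def vOrder (f : ℂ → ℂ) (z : ℂ) : ℕ∞ :=
  sInf ((fun n : ℕ => (n : ℕ∞)) '' {n : ℕ | iteratedDeriv n f z ≠ 0})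

section auxiliary
open Complex MeasureTheory Real
open scoped ENNReal NNReal

lemma exp_circle_int {k : ℤ} (hk : k ≠ 0) :
    ∫ θ : ℝ in (-π)..π, Complex.exp ((k : ℂ) * θ * I) = 0 := by
  have hc : (k : ℂ) * I ≠ 0 := by
    simp [Complex.I_ne_zero, hk]
  have h := integral_exp_mul_complex (a := -π) (b := π) hc
  have h2 : ∀ θ : ℝ, (k : ℂ) * θ * I = ((k : ℂ) * I) * θ := by intro θ; ring
  simp_rw [h2, h]
  have h3 : (k : ℂ) * I * ↑π = (k : ℂ) * I * ↑(-π : ℝ) + k * (2 * π * I) := by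
    push_cast; ring
  rw [h3, Complex.exp_add, Complex.exp_int_mul_two_pi_mul_I, mul_one, sub_self, zero_div]

lemma exp_circle_int_Ioo {k : ℤ} (hk : k ≠ 0) :
    ∫ θ : ℝ in Set.Ioo (-π) π, Complex.exp ((k : ℂ) * θ * I) = 0 := by
  rw [← MeasureTheory.integral_Ioc_eq_integral_Ioo,
    ← intervalIntegral.integral_of_le (by linarith [Real.pi_pos])]
  exact exp_circle_int hk

-- orthogonality on circle of radius s
lemma circle_orth {s : ℝ} (n m : ℕ) :
    ∫ θ : ℝ in Set.Ioo (-π) π,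
      (starRingEnd ℂ) ((s * Complex.exp (θ * I)) ^ n) * (s * Complex.exp (θ * I)) ^ m
      = if m = n then 2 * π * (s : ℂ) ^ (2 * n) else 0 := by
  have key : ∀ θ : ℝ, (starRingEnd ℂ) (((s:ℂ) * Complex.exp (θ * I)) ^ n)
      * ((s:ℂ) * Complex.exp (θ * I)) ^ m
      = (s : ℂ) ^ (n + m) * Complex.exp ((((m : ℤ) - (n : ℤ) : ℤ) : ℂ) * θ * I) := by
    intro θ
    have hconj : (starRingEnd ℂ) ((s:ℂ) * Complex.exp (θ * I))
        = (s : ℂ) * Complex.exp (-(θ * I)) := by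
      rw [map_mul, Complex.conj_ofReal, ← Complex.exp_conj]
      congr 1
      simp [Complex.conj_I]
    rw [map_pow, hconj, mul_pow, mul_pow, ← Complex.exp_nat_mul, ← Complex.exp_nat_mul]
    rw [mul_mul_mul_comm, ← pow_add, ← Complex.exp_add]
    congr 1
    push_cast
    ring
  simp_rw [key]
  rw [MeasureTheory.integral_const_mul]
  rcases eq_or_ne m n with h | h
  · subst h
    simp only [sub_self, Int.cast_zero, zero_mul, Complex.exp_zero]
    rw [setIntegral_const]
    simp [measureReal_def, Real.volume_Ioo, two_mul, ENNReal.toReal_ofReal (by positivity : (0:ℝ) ≤ π + π)]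
    push_cast
    ring
  · rw [if_neg h, exp_circle_int_Ioo (sub_ne_zero.2 (by exact_mod_cast h)), mul_zero]

lemma circle_parseval {b : ℕ → ℂ} {g : ℂ → ℂ} {s : ℝ} (hs : 0 < s)
    (hb : Summable fun n => ‖b n‖ * s ^ n)
    (hg : ∀ θ : ℝ, HasSum (fun n => b n * ((s : ℂ) * Complex.exp (θ * I)) ^ n)
      (g ((s : ℂ) * Complex.exp (θ * I)))) :
    ∫ θ in Set.Ioo (-π) π, ‖g ((s : ℂ) * Complex.exp (θ * I))‖ ^ 2 =
      2 * π * ∑' n, ‖b n‖ ^ 2 * s ^ (2 * n) := by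
  set z : ℝ → ℂ := fun θ => (s : ℂ) * Complex.exp (θ * I) with hz_def
  have hznorm : ∀ θ, ‖z θ‖ = s := by
    intro θ
    simp [hz_def, abs_of_pos hs, Complex.norm_exp_ofReal_mul_I]
  have hterm_norm : ∀ n θ, ‖b n * z θ ^ n‖ = ‖b n‖ * s ^ n := by
    intro n θ; rw [norm_mul, norm_pow, hznorm]
  set G : ℝ → ℂ := fun θ => g (z θ) with hG_def
  set M : ℝ := ∑' n, ‖b n‖ * s ^ n with hM_def
  have hM_nonneg : 0 ≤ M := tsum_nonneg (fun n => by positivity)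
  have hGtsum : ∀ θ, G θ = ∑' n, b n * z θ ^ n := fun θ => ((hg θ).tsum_eq).symm
  have hGcont : Continuous G := by
    have : Continuous (fun θ : ℝ => ∑' n, b n * z θ ^ n) := by
      apply continuous_tsum (u := fun n => ‖b n‖ * s ^ n)
      · intro n; fun_prop
      · exact hb
      · intro n θ; rw [hterm_norm]
    exact this.congr (fun θ => (hGtsum θ).symm)
  have hGbound : ∀ θ, ‖G θ‖ ≤ M := by
    intro θ
    rw [hGtsum θ]
    calc ‖∑' n, b n * z θ ^ n‖ ≤ ∑' n, ‖b n * z θ ^ n‖ :=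
          norm_tsum_le_tsum_norm (hb.congr fun n => (hterm_norm n θ).symm)
      _ = M := by rw [hM_def]; exact tsum_congr (fun n => hterm_norm n θ)
  have meas_Ioo : MeasurableSet (Set.Ioo (-π) π) := measurableSet_Ioo
  have vol_Ioo : (volume (Set.Ioo (-π) π)).toReal = 2 * π := by
    simp [Real.volume_Ioo]
    rw [ENNReal.toReal_ofReal (by positivity : (0:ℝ) ≤ π + π)]
    ring
  -- step C: ∫ conj(z^n) * G = 2π b_n s^(2n)
  have claim1 : ∀ n : ℕ, ∫ θ in Set.Ioo (-π) π, (starRingEnd ℂ) (z θ ^ n) * G θ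
      = 2 * π * (b n * (s : ℂ) ^ (2 * n)) := by
    intro n
    have hsum : ∀ θ, HasSum (fun m => (starRingEnd ℂ) (z θ ^ n) * (b m * z θ ^ m))
        ((starRingEnd ℂ) (z θ ^ n) * G θ) := fun θ => (hg θ).mul_left _
    have hrw : (fun θ => (starRingEnd ℂ) (z θ ^ n) * G θ)
        = fun θ => ∑' m, (starRingEnd ℂ) (z θ ^ n) * (b m * z θ ^ m) := by
      funext θ; exact ((hsum θ).tsum_eq).symm
    rw [hrw]
    have hint : ∀ m : ℕ, Integrable
        (fun θ => (starRingEnd ℂ) (z θ ^ n) * (b m * z θ ^ m))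
        (volume.restrict (Set.Ioo (-π) π)) := by
      intro m
      have hc : Continuous (fun θ => (starRingEnd ℂ) (z θ ^ n) * (b m * z θ ^ m)) := by
        exact (Complex.continuous_conj.comp (by fun_prop)).mul (by fun_prop)
      exact (hc.integrableOn_Icc (a := -π) (b := π)).mono_set Set.Ioo_subset_Icc_self
    have hnorm_eq : ∀ m : ℕ, (fun θ : ℝ => ‖(starRingEnd ℂ) (z θ ^ n) * (b m * z θ ^ m)‖)
        = fun _ : ℝ => (s ^ n) * (‖b m‖ * s ^ m) := by
      intro m; funext θ
      rw [norm_mul, RCLike.norm_conj, norm_pow, hznorm, hterm_norm]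
    have hsummable : Summable (fun m => ∫ θ in Set.Ioo (-π) π,
        ‖(starRingEnd ℂ) (z θ ^ n) * (b m * z θ ^ m)‖) := by
      have : (fun m => ∫ θ in Set.Ioo (-π) π,
          ‖(starRingEnd ℂ) (z θ ^ n) * (b m * z θ ^ m)‖)
          = fun m => (2 * π) * (s ^ n * (‖b m‖ * s ^ m)) := by
        funext m
        rw [hnorm_eq m, setIntegral_const, measureReal_def, vol_Ioo, smul_eq_mul]
      rw [this]
      exact ((hb.mul_left _).mul_left _)
    rw [← integral_tsum_of_summable_integral_norm hint hsummable]
    have hval : ∀ m : ℕ, ∫ θ in Set.Ioo (-π) π,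
        (starRingEnd ℂ) (z θ ^ n) * (b m * z θ ^ m)
        = b m * (if m = n then 2 * π * (s : ℂ) ^ (2*n) else 0) := by
      intro m
      rw [← circle_orth n m]
      rw [← integral_const_mul]
      congr 1; funext θ; ring
    rw [tsum_congr hval, tsum_eq_single n (by intro m hm; rw [if_neg hm, mul_zero])]
    rw [if_pos rfl]; ring
  -- main computation
  have key : ∀ θ, HasSum (fun n => b n * z θ ^ n * (starRingEnd ℂ) (G θ))
      (G θ * (starRingEnd ℂ) (G θ)) := fun θ => (hg θ).mul_right _
  have hrw2 : (fun θ => G θ * (starRingEnd ℂ) (G θ))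
      = fun θ => ∑' n, b n * z θ ^ n * (starRingEnd ℂ) (G θ) := by
    funext θ; exact ((key θ).tsum_eq).symm
  have hint2 : ∀ n : ℕ, Integrable (fun θ => b n * z θ ^ n * (starRingEnd ℂ) (G θ))
      (volume.restrict (Set.Ioo (-π) π)) := by
    intro n
    have hc : Continuous (fun θ => b n * z θ ^ n * (starRingEnd ℂ) (G θ)) := by
      apply Continuous.mul (by fun_prop) (Complex.continuous_conj.comp hGcont)
    exact (hc.integrableOn_Icc (a := -π) (b := π)).mono_set Set.Ioo_subset_Icc_self
  have hsummable2 : Summable (fun n => ∫ θ in Set.Ioo (-π) π,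
      ‖b n * z θ ^ n * (starRingEnd ℂ) (G θ)‖) := by
    apply Summable.of_nonneg_of_le (g := fun n => ∫ θ in Set.Ioo (-π) π,
        ‖b n * z θ ^ n * (starRingEnd ℂ) (G θ)‖)
      (fun n => integral_nonneg (fun θ => norm_nonneg _))
      (f := fun n => (2 * π) * (‖b n‖ * s ^ n * M))
    · intro n
      calc ∫ θ in Set.Ioo (-π) π, ‖b n * z θ ^ n * (starRingEnd ℂ) (G θ)‖
          ≤ ∫ _ in Set.Ioo (-π) π, ‖b n‖ * s ^ n * M := by
            apply setIntegral_mono_on ((hint2 n).norm) (integrableOn_const (by rw [Real.volume_Ioo]; exact ENNReal.ofReal_ne_top)) meas_Ioo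
            intro θ _
            rw [norm_mul, RCLike.norm_conj, hterm_norm]
            exact mul_le_mul_of_nonneg_left (hGbound θ) (by positivity)
        _ = (2 * π) * (‖b n‖ * s ^ n * M) := by
            rw [setIntegral_const, measureReal_def, vol_Ioo, smul_eq_mul]
    · exact (hb.mul_right M).mul_left _
  -- complex-valued integral identity
  have main : ∫ θ in Set.Ioo (-π) π, G θ * (starRingEnd ℂ) (G θ)
      = ∑' n, ((2 * π * (‖b n‖ ^ 2 * s ^ (2 * n)) : ℝ) : ℂ) := by
    rw [hrw2, ← integral_tsum_of_summable_integral_norm hint2 hsummable2]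
    apply tsum_congr
    intro n
    have : ∫ θ in Set.Ioo (-π) π, b n * z θ ^ n * (starRingEnd ℂ) (G θ)
        = (starRingEnd ℂ) (∫ θ in Set.Ioo (-π) π,
            (starRingEnd ℂ) (b n) * ((starRingEnd ℂ) (z θ ^ n) * G θ)) := by
      rw [← integral_conj]
      congr 1; funext θ
      simp only [map_mul, Complex.conj_conj]
      ring
    rw [this, integral_const_mul, claim1 n]
    have hb2 : b n * (starRingEnd ℂ) (b n) = ((‖b n‖ ^ 2 : ℝ) : ℂ) := by
      rw [Complex.mul_conj]
      norm_cast
      rw [← Complex.sq_norm]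
    simp only [map_mul, Complex.conj_conj, Complex.conj_ofReal, map_ofNat, map_pow]
    rw [show b n * (2 * (↑π:ℂ) * ((starRingEnd ℂ) (b n) * (↑s:ℂ) ^ (2*n)))
        = (b n * (starRingEnd ℂ) (b n)) * (2 * (↑π:ℂ) * (↑s:ℂ) ^ (2*n)) from by ring, hb2]
    push_cast
    ring
  -- conclude
  have hsq : ∀ n : ℕ, ‖b n‖ ^ 2 * s ^ (2 * n) = (‖b n‖ * s ^ n) ^ 2 := by
    intro n; rw [mul_pow, ← pow_mul, mul_comm 2 n]
  have ht_summable : Summable (fun n => 2 * π * (‖b n‖ ^ 2 * s ^ (2 * n))) := by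
    apply Summable.mul_left
    apply Summable.of_nonneg_of_le (fun n => by positivity)
      (f := fun n => M * (‖b n‖ * s ^ n)) _ (hb.mul_left M)
    intro n
    rw [hsq n, pow_two]
    exact mul_le_mul_of_nonneg_right
      (hb.le_tsum n (fun m _ => by positivity)) (by positivity)
  have lhs_eq : ∫ θ in Set.Ioo (-π) π, G θ * (starRingEnd ℂ) (G θ)
      = ((∫ θ in Set.Ioo (-π) π, ‖G θ‖ ^ 2 : ℝ) : ℂ) := by
    have h1 : ∀ θ : ℝ, G θ * (starRingEnd ℂ) (G θ) = ((‖G θ‖ ^ 2 : ℝ) : ℂ) := by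
      intro θ; rw [Complex.mul_conj]; norm_cast; rw [← Complex.sq_norm]
    simp_rw [h1]
    exact integral_ofReal (𝕜 := ℂ) (f := fun θ => ‖G θ‖ ^ 2) (μ := volume.restrict (Set.Ioo (-π) π))
  rw [lhs_eq, ← Complex.ofReal_tsum] at main
  have heq := Complex.ofReal_injective main
  show ∫ θ in Set.Ioo (-π) π, ‖G θ‖ ^ 2 = 2 * π * ∑' n, ‖b n‖ ^ 2 * s ^ (2 * n)
  rw [heq, tsum_mul_left]

lemma area_bound' {g : ℂ → ℂ} {c : ℕ → ℂ} {r : ℝ} (hr0 : 0 < r) (hr1 : r < 1)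
    (hgmeas : Measurable g)
    (hgcont : ContinuousOn g (Metric.closedBall 0 r))
    (hsum : ∀ s : ℝ, 0 < s → s ≤ r → (Summable fun n => ‖c n‖ * s ^ n) ∧
      ∀ θ : ℝ, HasSum (fun n => c n * ((s:ℂ) * Complex.exp (θ * I)) ^ n)
        (g ((s:ℂ) * Complex.exp (θ * I))))
    (hw : Summable fun n : ℕ => ‖c n‖ ^ 2 / (((n:ℝ) + 1) * ((n:ℝ) + 2))) :
    ∫ z in Metric.closedBall (0:ℂ) r, (1 - ‖z‖ ^ 2) * ‖g z‖ ^ 2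
      ≤ π * ∑' n : ℕ, ‖c n‖ ^ 2 / (((n:ℝ) + 1) * ((n:ℝ) + 2)) := by
  set G : ℂ → ℝ := fun z => (1 - ‖z‖ ^ 2) * ‖g z‖ ^ 2 with hG_def
  have hGmeas : Measurable G := by
    exact (measurable_const.sub ((measurable_norm.pow measurable_const))).mul
      ((hgmeas.norm.pow measurable_const))
  set F : ℂ → ℝ := Set.indicator (Metric.closedBall (0:ℂ) r) G with hF_def
  have hFmeas : Measurable F := hGmeas.indicator measurableSet_closedBall
  -- bound for G on the closed ball
  have hGcont : ContinuousOn G (Metric.closedBall (0:ℂ) r) := by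
    exact ((continuous_const.sub ((continuous_norm.pow 2))).continuousOn).mul
      ((hgcont.norm).pow 2)
  obtain ⟨M, hM⟩ := (isCompact_closedBall (0:ℂ) r).exists_bound_of_continuousOn hGcont
  have hM0 : 0 ≤ M := le_trans (norm_nonneg _) (hM 0 (Metric.mem_closedBall_self hr0.le))
  -- the polar-coordinates function
  set h : ℝ × ℝ → ℝ := fun p => p.1 • F (Complex.polarCoord.symm p) with hh_def
  have hsymm_cont : Continuous (fun p : ℝ × ℝ => Complex.polarCoord.symm p) := by
    simp_rw [Complex.polarCoord_symm_apply]
    fun_prop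
  have hhmeas : Measurable h := by
    exact measurable_fst.smul (hFmeas.comp hsymm_cont.measurable)
  have step1 : ∫ z in Metric.closedBall (0:ℂ) r, G z = ∫ p : ℂ, F p := by
    rw [integral_indicator measurableSet_closedBall]
  have step2 : ∫ p : ℂ, F p = ∫ p in polarCoord.target, h p :=
    (Complex.integral_comp_polarCoord_symm F).symm
  set A : Set (ℝ × ℝ) := Set.Ioc 0 r ×ˢ Set.Ioo (-π) π with hA_def
  have hAmeas : MeasurableSet A := measurableSet_Ioc.prod measurableSet_Ioo
  have hAsub : A ⊆ polarCoord.target := by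
    rw [polarCoord_target]
    exact Set.prod_mono Set.Ioc_subset_Ioi_self subset_rfl
  have hnorm_symm : ∀ p : ℝ × ℝ, 0 < p.1 → ‖Complex.polarCoord.symm p‖ = p.1 := by
    intro p hp
    rw [Complex.norm_polarCoord_symm, abs_of_pos hp]
  have step3 : ∫ p in polarCoord.target, h p = ∫ p in A, h p := by
    apply setIntegral_eq_of_subset_of_forall_diff_eq_zero
      (by rw [polarCoord_target]; exact measurableSet_Ioi.prod measurableSet_Ioo) hAsub
    rintro ⟨s, θ⟩ ⟨hmem, hnotA⟩
    rw [polarCoord_target] at hmem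
    obtain ⟨hs, hθ⟩ := hmem
    have hsr : r < s := by
      by_contra hc
      exact hnotA ⟨⟨hs, not_lt.1 hc⟩, hθ⟩
    have : Complex.polarCoord.symm (s, θ) ∉ Metric.closedBall (0:ℂ) r := by
      simp only [Metric.mem_closedBall, dist_zero_right]
      rw [hnorm_symm (s, θ) hs]
      exact not_le.2 hsr
    simp only [hh_def, hF_def, Set.indicator_of_notMem this, smul_zero]
  -- integrability on A
  haveI : Fact (volume (Set.Ioc (0:ℝ) r) < ⊤) := ⟨by rw [Real.volume_Ioc]; exact ENNReal.ofReal_lt_top⟩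
  haveI : Fact (volume (Set.Ioo (-π) π) < ⊤) := ⟨by rw [Real.volume_Ioo]; exact ENNReal.ofReal_lt_top⟩
  have hbound : ∀ p ∈ A, ‖h p‖ ≤ r * M := by
    rintro ⟨s, θ⟩ ⟨hs, hθ⟩
    have hs0 : 0 < s := hs.1
    have hmem : Complex.polarCoord.symm (s, θ) ∈ Metric.closedBall (0:ℂ) r := by
      simp only [Metric.mem_closedBall, dist_zero_right]
      rw [hnorm_symm (s, θ) hs0]; exact hs.2
    simp only [hh_def, hF_def, Set.indicator_of_mem hmem, smul_eq_mul, norm_mul]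
    have h1 : ‖s‖ ≤ r := by rw [Real.norm_eq_abs, abs_of_pos hs0]; exact hs.2
    exact mul_le_mul h1 (hM _ hmem) (norm_nonneg _) hr0.le
  have hInt : Integrable h ((volume.restrict (Set.Ioc 0 r)).prod
      (volume.restrict (Set.Ioo (-π) π))) := by
    apply Integrable.mono' (integrable_const (r * M)) hhmeas.aestronglyMeasurable
    rw [Measure.prod_restrict, ← hA_def, ae_restrict_iff' hAmeas]
    exact Filter.Eventually.of_forall hbound
  have step4 : ∫ p in A, h p = ∫ s in Set.Ioc (0:ℝ) r, ∫ θ in Set.Ioo (-π) π, h (s, θ) := by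
    rw [Measure.volume_eq_prod, ← Measure.prod_restrict, MeasureTheory.integral_prod _ hInt]
  -- inner integral via Parseval
  have hsymm_eq : ∀ s θ : ℝ, Complex.polarCoord.symm (s, θ) = (s:ℂ) * Complex.exp (θ * I) := by
    intro s θ
    rw [Complex.polarCoord_symm_apply]
    rw [Complex.exp_mul_I]
    norm_cast
  have inner_eq : ∀ s ∈ Set.Ioc (0:ℝ) r, ∫ θ in Set.Ioo (-π) π, h (s, θ)
      = ∑' n : ℕ, 2 * π * ‖c n‖ ^ 2 * (s ^ (2*n+1) - s ^ (2*n+3)) := by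
    intro s hs
    have hs0 : 0 < s := hs.1
    have hfs : ∀ θ : ℝ, h (s, θ) = (s * (1 - s^2)) * ‖g ((s:ℂ) * Complex.exp (θ * I))‖ ^ 2 := by
      intro θ
      have hmem : Complex.polarCoord.symm (s, θ) ∈ Metric.closedBall (0:ℂ) r := by
        simp only [Metric.mem_closedBall, dist_zero_right]
        rw [hnorm_symm (s, θ) hs0]; exact hs.2
      simp only [hh_def, hF_def, Set.indicator_of_mem hmem, smul_eq_mul, hG_def]
      rw [hsymm_eq s θ]
      have : ‖(s:ℂ) * Complex.exp (θ * I)‖ = s := by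
        rw [norm_mul, Complex.norm_real, Real.norm_eq_abs,
          Complex.norm_exp_ofReal_mul_I, abs_of_pos hs0, mul_one]
      rw [this]; ring
    simp_rw [hfs]
    rw [integral_const_mul, circle_parseval hs0 (hsum s hs0 hs.2).1 (hsum s hs0 hs.2).2]
    rw [← tsum_mul_left, ← tsum_mul_left]
    apply tsum_congr
    intro n
    ring
  have step5 : ∫ s in Set.Ioc (0:ℝ) r, ∫ θ in Set.Ioo (-π) π, h (s, θ)
      = ∫ s in Set.Ioc (0:ℝ) r, ∑' n : ℕ, 2 * π * ‖c n‖ ^ 2 * (s ^ (2*n+1) - s ^ (2*n+3)) :=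
    setIntegral_congr_fun measurableSet_Ioc inner_eq
  -- single-term radial integral bound
  have hterm_nonneg : ∀ (n : ℕ) (s : ℝ), s ∈ Set.Ioc (0:ℝ) 1 →
      0 ≤ s ^ (2*n+1) - s ^ (2*n+3) := by
    intro n s hs
    have : s ^ (2*n+3) ≤ s ^ (2*n+1) :=
      pow_le_pow_of_le_one hs.1.le hs.2 (by omega)
    linarith
  have hradial : ∀ n : ℕ, ∫ s in Set.Ioc (0:ℝ) r, (s ^ (2*n+1) - s ^ (2*n+3))
      ≤ 1 / (2 * ((n:ℝ)+1) * ((n:ℝ)+2)) := by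
    intro n
    have hsub : Set.Ioc (0:ℝ) r ⊆ Set.Ioc (0:ℝ) 1 := Set.Ioc_subset_Ioc_right hr1.le
    have hint1 : IntegrableOn (fun s : ℝ => s ^ (2*n+1) - s ^ (2*n+3)) (Set.Ioc (0:ℝ) 1) := by
      apply Continuous.integrableOn_Ioc
      fun_prop
    have h1 : ∫ s in Set.Ioc (0:ℝ) r, (s ^ (2*n+1) - s ^ (2*n+3))
        ≤ ∫ s in Set.Ioc (0:ℝ) 1, (s ^ (2*n+1) - s ^ (2*n+3)) := by
      apply setIntegral_mono_set hint1
      · filter_upwards [ae_restrict_mem measurableSet_Ioc] with s hs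
        exact hterm_nonneg n s hs
      · exact HasSubset.Subset.eventuallyLE hsub
    have h2 : ∫ s in Set.Ioc (0:ℝ) 1, (s ^ (2*n+1) - s ^ (2*n+3))
        = 1 / (2*(n:ℝ)+2) - 1 / (2*(n:ℝ)+4) := by
      rw [← intervalIntegral.integral_of_le (by norm_num : (0:ℝ) ≤ 1)]
      rw [intervalIntegral.integral_sub (intervalIntegral.intervalIntegrable_pow _)
        (intervalIntegral.intervalIntegrable_pow _)]
      rw [integral_pow, integral_pow]
      push_cast
      norm_num
      ring_nf
    rw [h2] at h1
    refine h1.trans (le_of_eq ?_)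
    have hn1 : (0:ℝ) < (n:ℝ) + 1 := by positivity
    have hn2 : (0:ℝ) < (n:ℝ) + 2 := by positivity
    field_simp
    ring
  -- summability of integrals
  have hterm_int : ∀ n : ℕ, Integrable
      (fun s : ℝ => 2 * π * ‖c n‖ ^ 2 * (s ^ (2*n+1) - s ^ (2*n+3)))
      (volume.restrict (Set.Ioc (0:ℝ) r)) := by
    intro n
    apply Continuous.integrableOn_Ioc
    fun_prop
  have hterm_bound : ∀ n : ℕ, ∫ s in Set.Ioc (0:ℝ) r,
      ‖2 * π * ‖c n‖ ^ 2 * (s ^ (2*n+1) - s ^ (2*n+3))‖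
      ≤ π * (‖c n‖ ^ 2 / (((n:ℝ) + 1) * ((n:ℝ) + 2))) := by
    intro n
    have habs : ∀ s ∈ Set.Ioc (0:ℝ) r, ‖2 * π * ‖c n‖ ^ 2 * (s ^ (2*n+1) - s ^ (2*n+3))‖
        = 2 * π * ‖c n‖ ^ 2 * (s ^ (2*n+1) - s ^ (2*n+3)) := by
      intro s hs
      have hnn := hterm_nonneg n s (Set.Ioc_subset_Ioc_right hr1.le hs)
      rw [Real.norm_eq_abs, _root_.abs_of_nonneg (by positivity)]
    rw [setIntegral_congr_fun measurableSet_Ioc habs, integral_const_mul]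
    calc 2 * π * ‖c n‖ ^ 2 * ∫ s in Set.Ioc (0:ℝ) r, (s ^ (2*n+1) - s ^ (2*n+3))
        ≤ 2 * π * ‖c n‖ ^ 2 * (1 / (2 * ((n:ℝ)+1) * ((n:ℝ)+2))) := by
          apply mul_le_mul_of_nonneg_left (hradial n) (by positivity)
      _ = π * (‖c n‖ ^ 2 / (((n:ℝ) + 1) * ((n:ℝ) + 2))) := by
          have hn1 : (0:ℝ) < (n:ℝ) + 1 := by positivity
          have hn2 : (0:ℝ) < (n:ℝ) + 2 := by positivity
          field_simp
  have hsummable : Summable (fun n : ℕ => ∫ s in Set.Ioc (0:ℝ) r,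
      ‖2 * π * ‖c n‖ ^ 2 * (s ^ (2*n+1) - s ^ (2*n+3))‖) := by
    apply Summable.of_nonneg_of_le (fun n => integral_nonneg (fun s => norm_nonneg _))
      hterm_bound (hw.mul_left π)
  have step6 : ∫ s in Set.Ioc (0:ℝ) r, ∑' n : ℕ, 2 * π * ‖c n‖ ^ 2 * (s ^ (2*n+1) - s ^ (2*n+3))
      = ∑' n : ℕ, ∫ s in Set.Ioc (0:ℝ) r, 2 * π * ‖c n‖ ^ 2 * (s ^ (2*n+1) - s ^ (2*n+3)) :=
    (integral_tsum_of_summable_integral_norm hterm_int hsummable).symm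
  -- final bound
  rw [step1, step2, step3, step4, step5, step6]
  have hfinal : ∀ n : ℕ, ∫ s in Set.Ioc (0:ℝ) r, 2 * π * ‖c n‖ ^ 2 * (s ^ (2*n+1) - s ^ (2*n+3))
      ≤ π * (‖c n‖ ^ 2 / (((n:ℝ) + 1) * ((n:ℝ) + 2))) := by
    intro n
    refine le_trans ?_ (hterm_bound n)
    exact integral_mono ((hterm_int n)) ((hterm_int n).norm) (fun s => le_abs_self _)
  rw [← tsum_mul_left]
  refine Summable.tsum_le_tsum hfinal ?_ (hw.mul_left π)
  apply Summable.of_nonneg_of_le _ hfinal (hw.mul_left π)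
  intro n
  apply setIntegral_nonneg measurableSet_Ioc
  intro s hs
  have := hterm_nonneg n s (Set.Ioc_subset_Ioc_right hr1.le hs)
  positivity

lemma integrableOn_ball_of_bound {G : ℂ → ℝ} (hGmeas : Measurable G)
    (hGnn : ∀ z ∈ Metric.ball (0:ℂ) 1, 0 ≤ G z) {C : ℝ}
    (hC : ∀ r : ℝ, 0 < r → r < 1 →
      IntegrableOn G (Metric.closedBall 0 r) volume ∧
      ∫ z in Metric.closedBall (0:ℂ) r, G z ≤ C) :
    IntegrableOn G (Metric.ball (0:ℂ) 1) volume := by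
  refine ⟨hGmeas.aestronglyMeasurable.restrict, ?_⟩
  show (∫⁻ z in Metric.ball (0:ℂ) 1, ‖G z‖₊ ∂volume) < ⊤
  set rk : ℕ → ℝ := fun k => 1 - 1/(k+2) with hrk_def
  have hrk0 : ∀ k : ℕ, 0 < rk k := by
    intro k
    have h1 : 1/((k:ℝ)+2) < 1 := by
      rw [div_lt_one (by positivity)]; linarith [Nat.cast_nonneg (α := ℝ) k]
    simp only [hrk_def]; linarith
  have hrk1 : ∀ k : ℕ, rk k < 1 := by
    intro k; simp only [hrk_def]
    have : 0 < 1/((k:ℝ)+2) := by positivity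
    linarith
  have hrkmono : Monotone rk := by
    intro i j hij
    simp only [hrk_def]
    have : 1/((j:ℝ)+2) ≤ 1/((i:ℝ)+2) := by
      apply one_div_le_one_div_of_le (by positivity)
      have : (i:ℝ) ≤ j := by exact_mod_cast hij
      linarith
    linarith
  have hunion : (⋃ k, Metric.closedBall (0:ℂ) (rk k)) = Metric.ball (0:ℂ) 1 := by
    ext z
    simp only [Set.mem_iUnion, Metric.mem_closedBall, Metric.mem_ball, dist_zero_right]
    constructor
    · rintro ⟨k, hk⟩; exact lt_of_le_of_lt hk (hrk1 k)
    · intro hz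
      obtain ⟨n, hn⟩ := exists_nat_one_div_lt (by linarith : (0:ℝ) < 1 - ‖z‖)
      refine ⟨n, ?_⟩
      have h2 : 1/((n:ℝ)+2) ≤ 1/((n:ℝ)+1) := by
        apply one_div_le_one_div_of_le (by positivity); linarith
      simp only [hrk_def]; linarith
  set H : ℂ → ℝ≥0∞ := fun z => ENNReal.ofReal (G z) with hH_def
  have hHmeas : Measurable H := hGmeas.ennreal_ofReal
  have hHnorm : ∀ᵐ z ∂(volume.restrict (Metric.ball (0:ℂ) 1)),
      (‖G z‖₊ : ℝ≥0∞) = H z := by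
    filter_upwards [ae_restrict_mem measurableSet_ball] with z hz
    rw [hH_def]
    simp only
    rw [← Real.enorm_eq_ofReal (hGnn z hz), enorm_eq_nnnorm]
  rw [lintegral_congr_ae hHnorm]
  have key : (∫⁻ z in Metric.ball (0:ℂ) 1, H z ∂volume)
      = ⨆ k, ∫⁻ z in Metric.closedBall (0:ℂ) (rk k), H z ∂volume := by
    rw [← lintegral_indicator measurableSet_ball]
    have heq : (Metric.ball (0:ℂ) 1).indicator H
        = fun z => ⨆ k, (Metric.closedBall (0:ℂ) (rk k)).indicator H z := by
      funext z
      by_cases hz : z ∈ Metric.ball (0:ℂ) 1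
      · rw [Set.indicator_of_mem hz]
        rw [← hunion] at hz
        obtain ⟨k, hk⟩ := Set.mem_iUnion.1 hz
        apply le_antisymm
        · refine le_trans ?_ (le_iSup _ k)
          rw [Set.indicator_of_mem hk]
        · exact iSup_le fun k => Set.indicator_le_self _ _ z
      · rw [Set.indicator_of_notMem hz]
        rw [← hunion] at hz
        simp only [Set.mem_iUnion, not_exists] at hz
        symm
        simp only [ENNReal.iSup_eq_zero]
        intro k
        rw [Set.indicator_of_notMem (hz k)]
    rw [heq, lintegral_iSup]
    · exact iSup_congr fun k => lintegral_indicator measurableSet_closedBall _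
    · exact fun k => hHmeas.indicator measurableSet_closedBall
    · intro i j hij
      intro z
      exact Set.indicator_le_indicator_of_subset
        (Metric.closedBall_subset_closedBall (hrkmono hij)) (fun _ => zero_le) z
  rw [key]
  have hub : ∀ k : ℕ, (∫⁻ z in Metric.closedBall (0:ℂ) (rk k), H z ∂volume)
      ≤ ENNReal.ofReal C := by
    intro k
    obtain ⟨hint, hbd⟩ := hC (rk k) (hrk0 k) (hrk1 k)
    have hnn : 0 ≤ᵐ[volume.restrict (Metric.closedBall (0:ℂ) (rk k))] G := by
      filter_upwards [ae_restrict_mem measurableSet_closedBall] with z hz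
      exact hGnn z (lt_of_le_of_lt (Metric.mem_closedBall.1 hz) (hrk1 k))
    rw [hH_def, ← ofReal_integral_eq_lintegral_ofReal hint hnn]
    exact ENNReal.ofReal_le_ofReal hbd
  exact lt_of_le_of_lt (iSup_le hub) ENNReal.ofReal_lt_top

lemma hasSum_coeff_pow {g : ℂ → ℂ} {P : FormalMultilinearSeries ℂ ℂ ℂ} {R : ℝ≥0}
    (h : HasFPowerSeriesOnBall g P 0 R) {z : ℂ} (hz : ‖z‖ < R) :
    HasSum (fun n => P.coeff n * z ^ n) (g z) := by
  have hmem : z ∈ EMetric.ball (0:ℂ) R := by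
    rw [show EMetric.ball (0:ℂ) R = Metric.eball 0 R from rfl, mem_emetric_ball_zero_iff]
    exact_mod_cast hz
  have := h.hasSum hmem
  rw [zero_add] at this
  refine this.congr_fun fun n => ?_
  rw [FormalMultilinearSeries.apply_eq_pow_smul_coeff, smul_eq_mul, mul_comm]

lemma summable_coeff_norm {g : ℂ → ℂ} {P : FormalMultilinearSeries ℂ ℂ ℂ} {R : ℝ≥0}
    (h : HasFPowerSeriesOnBall g P 0 R) {s : ℝ} (hs0 : 0 ≤ s) (hsR : s < R) :
    Summable fun n => ‖P.coeff n‖ * s ^ n := by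
  have h1 : s.toNNReal < R := by
    rw [← NNReal.coe_lt_coe, Real.coe_toNNReal _ hs0]; exact hsR
  have h2 : (↑(s.toNNReal) : ℝ≥0∞) < P.radius :=
    lt_of_lt_of_le (by exact_mod_cast h1) h.r_le
  have := P.summable_norm_mul_pow h2
  refine this.congr fun n => ?_
  rw [FormalMultilinearSeries.norm_apply_eq_norm_coef, Real.coe_toNNReal _ hs0]

end auxiliary

open Complex Real in
set_option maxHeartbeats 2000000 in
/-- **Critical sets are Bergman zero sets.** For every nonconstant holomorphic map
`f` of the open unit disk into the closed unit disk there is a holomorphic function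
`φ` on the disk, not identically zero, in the Bergman space `A²₁`
(`∬_𝔻 (1 − |z|²)|φ(z)|² dxdy < ∞`), whose order of vanishing at every point of the
disk equals that of `f'`. -/
theorem critical_set_is_bergman_zero_set (f : ℂ → ℂ)
    (hf_diff : ∀ z ∈ Metric.ball (0 : ℂ) 1, DifferentiableAt ℂ f z)
    (hf_le : ∀ z ∈ Metric.ball (0 : ℂ) 1, ‖f z‖ ≤ 1)
    (hf_nc : ∃ z ∈ Metric.ball (0 : ℂ) 1, ∃ w ∈ Metric.ball (0 : ℂ) 1, f z ≠ f w) :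
    ∃ φ : ℂ → ℂ,
      (∀ z ∈ Metric.ball (0 : ℂ) 1, DifferentiableAt ℂ φ z) ∧
      (∃ z ∈ Metric.ball (0 : ℂ) 1, φ z ≠ 0) ∧
      IntegrableOn (fun z : ℂ => (1 - ‖z‖ ^ 2) * ‖φ z‖ ^ 2) (Metric.ball 0 1) volume ∧
      ∀ z ∈ Metric.ball (0 : ℂ) 1, vOrder φ z = vOrder (deriv f) z := by
  have hd : DifferentiableOn ℂ f (Metric.ball 0 1) :=
    fun z hz => (hf_diff z hz).differentiableWithinAt
  have hA : AnalyticOnNhd ℂ f (Metric.ball 0 1) := hd.analyticOnNhd isOpen_ball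
  have hA' : AnalyticOnNhd ℂ (deriv f) (Metric.ball 0 1) := hA.deriv
  have hd' : DifferentiableOn ℂ (deriv f) (Metric.ball 0 1) :=
    fun z hz => ((hA' z hz).differentiableAt).differentiableWithinAt
  -- power series of f at 0 valid on every radius R < 1
  set P : FormalMultilinearSeries ℂ ℂ ℂ := cauchyPowerSeries f 0 ((1/2 : ℝ≥0) : ℝ) with hP_def
  have hge : ∀ R : ℝ≥0, 0 < R → (R:ℝ) < 1 →
      HasFPowerSeriesOnBall f (cauchyPowerSeries f 0 (R:ℝ)) 0 R := by
    intro R hR hR1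
    exact (hd.mono (Metric.closedBall_subset_ball hR1)).hasFPowerSeriesOnBall hR
  have hP0 : HasFPowerSeriesOnBall f P 0 (1/2 : ℝ≥0) := by
    rw [hP_def]
    exact hge (1/2) (by norm_num) (by norm_num)
  have hP : ∀ R : ℝ≥0, 0 < R → (R:ℝ) < 1 → HasFPowerSeriesOnBall f P 0 R := by
    intro R hR hR1
    have h1 := hge R hR hR1
    rwa [h1.hasFPowerSeriesAt.eq_formalMultilinearSeries hP0.hasFPowerSeriesAt] at h1
  -- same for deriv f
  set Q : FormalMultilinearSeries ℂ ℂ ℂ :=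
    cauchyPowerSeries (deriv f) 0 ((1/2 : ℝ≥0) : ℝ) with hQ_def
  have hge' : ∀ R : ℝ≥0, 0 < R → (R:ℝ) < 1 →
      HasFPowerSeriesOnBall (deriv f) (cauchyPowerSeries (deriv f) 0 (R:ℝ)) 0 R := by
    intro R hR hR1
    exact (hd'.mono (Metric.closedBall_subset_ball hR1)).hasFPowerSeriesOnBall hR
  have hQ0 : HasFPowerSeriesOnBall (deriv f) Q 0 (1/2 : ℝ≥0) := by
    rw [hQ_def]; exact hge' (1/2) (by norm_num) (by norm_num)
  have hQ : ∀ R : ℝ≥0, 0 < R → (R:ℝ) < 1 → HasFPowerSeriesOnBall (deriv f) Q 0 R := by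
    intro R hR hR1
    have h1 := hge' R hR hR1
    rwa [h1.hasFPowerSeriesAt.eq_formalMultilinearSeries hQ0.hasFPowerSeriesAt] at h1
  -- coefficient relation
  have hcoeff : ∀ n : ℕ, Q.coeff n = ((n:ℂ) + 1) * P.coeff (n+1) := by
    intro n
    set L : (ℂ →L[ℂ] ℂ) →L[ℂ] ℂ := ContinuousLinearMap.apply ℂ ℂ (1:ℂ) with hL_def
    have h1 : HasFPowerSeriesOnBall (fderiv ℂ f) P.derivSeries 0 (1/2 : ℝ≥0) :=
      (hP (1/2) (by norm_num) (by norm_num)).fderiv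
    have h2 : HasFPowerSeriesOnBall (fun z => L (fderiv ℂ f z))
        (L.compFormalMultilinearSeries P.derivSeries) 0 (1/2 : ℝ≥0) :=
      L.comp_hasFPowerSeriesOnBall h1
    have h3 : (fun z => L (fderiv ℂ f z)) = deriv f := by
      funext z
      rw [hL_def]
      exact fderiv_apply_one_eq_deriv
    rw [h3] at h2
    have h4 : Q = L.compFormalMultilinearSeries P.derivSeries :=
      hQ0.hasFPowerSeriesAt.eq_formalMultilinearSeries h2.hasFPowerSeriesAt
    rw [h4]
    show (L.compFormalMultilinearSeries P.derivSeries) n (fun _ => 1) = _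
    rw [ContinuousLinearMap.compFormalMultilinearSeries_apply,
      ContinuousLinearMap.compContinuousMultilinearMap_coe]
    simp only [Function.comp_apply, hL_def, ContinuousLinearMap.apply_apply]
    have h5 := P.derivSeries_apply_diag n (1:ℂ)
    rw [h5]
    rw [nsmul_eq_mul]
    push_cast
    rfl
  -- ℓ² bound on coefficients of f
  have hsle : ∀ s : ℝ, 0 < s → s < 1 → ∑' n : ℕ, ‖P.coeff n‖^2 * s^(2*n) ≤ 1 := by
    intro s hs0 hs1
    set R : ℝ≥0 := ((1+s)/2 : ℝ).toNNReal with hR_def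
    have hRs : s < (R:ℝ) := by
      rw [hR_def, Real.coe_toNNReal _ (by linarith)]; linarith
    have hR0 : 0 < R := by
      rw [← NNReal.coe_lt_coe]; push_cast; linarith
    have hR1 : (R:ℝ) < 1 := by
      rw [hR_def, Real.coe_toNNReal _ (by linarith)]; linarith
    have hps := hP R hR0 hR1
    have hsum1 : Summable fun n => ‖P.coeff n‖ * s ^ n :=
      summable_coeff_norm hps hs0.le hRs
    have hhs : ∀ θ : ℝ, HasSum (fun n => P.coeff n * ((s:ℂ) * Complex.exp (θ * I)) ^ n)
        (f ((s:ℂ) * Complex.exp (θ * I))) := by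
      intro θ
      apply hasSum_coeff_pow hps
      rw [norm_mul, Complex.norm_exp_ofReal_mul_I,
        mul_one, Complex.norm_real, Real.norm_eq_abs, abs_of_pos hs0]
      exact hRs
    have hpar := circle_parseval hs0 hsum1 hhs
    -- the integral is at most 2π
    have hmemball : ∀ θ : ℝ, ((s:ℂ) * Complex.exp (θ * I)) ∈ Metric.ball (0:ℂ) 1 := by
      intro θ
      rw [Metric.mem_ball, dist_zero_right, norm_mul,
        Complex.norm_exp_ofReal_mul_I, mul_one, Complex.norm_real, Real.norm_eq_abs,
        abs_of_pos hs0]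
      exact hs1
    have hcont : Continuous (fun θ : ℝ => ‖f ((s:ℂ) * Complex.exp (θ * I))‖ ^ 2) := by
      apply Continuous.pow
      apply Continuous.norm
      apply hd.continuousOn.comp_continuous (by fun_prop) hmemball
    have hle2pi : ∫ θ in Set.Ioo (-π) π, ‖f ((s:ℂ) * Complex.exp (θ * I))‖ ^ 2 ≤ 2 * π := by
      have hub : ∀ θ ∈ Set.Ioo (-π) π, ‖f ((s:ℂ) * Complex.exp (θ * I))‖ ^ 2 ≤ 1 := by
        intro θ _
        have := hf_le _ (hmemball θ)
        nlinarith [norm_nonneg (f ((s:ℂ) * Complex.exp (θ * I)))]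
      calc ∫ θ in Set.Ioo (-π) π, ‖f ((s:ℂ) * Complex.exp (θ * I))‖ ^ 2
          ≤ ∫ _ in Set.Ioo (-π) π, (1:ℝ) := by
            apply setIntegral_mono_on
              ((hcont.integrableOn_Icc).mono_set Set.Ioo_subset_Icc_self)
              (integrableOn_const (by rw [Real.volume_Ioo]; exact ENNReal.ofReal_ne_top))
              measurableSet_Ioo hub
        _ = 2 * π := by
            rw [setIntegral_const, smul_eq_mul, mul_one, measureReal_def, Real.volume_Ioo,
              ENNReal.toReal_ofReal (by linarith [Real.pi_pos] : (0:ℝ) ≤ π - -π)]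
            ring
    rw [hpar] at hle2pi
    have h2pi : (0:ℝ) < 2 * π := by positivity
    have : 2 * π * ∑' n : ℕ, ‖P.coeff n‖^2 * s^(2*n) ≤ 2 * π * 1 := by
      rw [mul_one]; exact hle2pi
    exact le_of_mul_le_mul_left this h2pi
  -- summability of squared coefficients
  have hsummable_sq : ∀ {s : ℝ}, 0 < s → s < 1 →
      Summable (fun n => ‖P.coeff n‖^2 * s^(2*n)) := by
    intro s hs0 hs1
    set R : ℝ≥0 := ((1+s)/2 : ℝ).toNNReal with hR_def
    have hRs : s < (R:ℝ) := by
      rw [hR_def, Real.coe_toNNReal _ (by linarith)]; linarith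
    have hR0 : 0 < R := by rw [← NNReal.coe_lt_coe]; push_cast; linarith
    have hR1 : (R:ℝ) < 1 := by
      rw [hR_def, Real.coe_toNNReal _ (by linarith)]; linarith
    have hb := summable_coeff_norm (hP R hR0 hR1) hs0.le hRs
    set M : ℝ := ∑' n, ‖P.coeff n‖ * s ^ n with hM_def
    apply Summable.of_nonneg_of_le (fun n => by positivity)
      (f := fun n => M * (‖P.coeff n‖ * s ^ n)) _ (hb.mul_left M)
    intro n
    have h1 : ‖P.coeff n‖^2 * s^(2*n) = (‖P.coeff n‖ * s^n)^2 := by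
      rw [mul_pow, ← pow_mul, mul_comm 2 n]
    rw [h1, pow_two]
    exact mul_le_mul_of_nonneg_right (hb.le_tsum n (fun m _ => by positivity)) (by positivity)
  have ha_sq : Summable (fun n => ‖P.coeff n‖ ^ 2) := by
    apply summable_of_sum_range_le (c := 1) (fun n => by positivity)
    intro N
    -- limit along s_k → 1
    set sk : ℕ → ℝ := fun k => 1 - 1/(k+2) with hsk_def
    have hsk0 : ∀ k : ℕ, 0 < sk k := by
      intro k
      have h1 : 1/((k:ℝ)+2) < 1 := by
        rw [div_lt_one (by positivity)]; linarith [Nat.cast_nonneg (α := ℝ) k]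
      simp only [hsk_def]; linarith
    have hsk1 : ∀ k : ℕ, sk k < 1 := by
      intro k; simp only [hsk_def]
      have : 0 < 1/((k:ℝ)+2) := by positivity
      linarith
    have hsktendsto : Tendsto sk atTop (nhds 1) := by
      rw [hsk_def]
      have h0 : Tendsto (fun k : ℕ => 1/((k:ℝ)+2)) atTop (nhds 0) := by
        apply Tendsto.comp tendsto_one_div_add_atTop_nhds_zero_nat (tendsto_add_atTop_nat 1)
          |>.congr
        intro k
        simp only [Function.comp_apply]
        push_cast
        ring_nf
      simpa using tendsto_const_nhds.sub h0
    have hbound : ∀ k : ℕ, ∑ n ∈ Finset.range N, ‖P.coeff n‖^2 * (sk k)^(2*n) ≤ 1 := by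
      intro k
      refine le_trans ?_ (hsle (sk k) (hsk0 k) (hsk1 k))
      exact Summable.sum_le_tsum _ (fun n _ => mul_nonneg (by positivity) (pow_nonneg (hsk0 k).le _))
        (hsummable_sq (hsk0 k) (hsk1 k))
    have htend : Tendsto (fun k => ∑ n ∈ Finset.range N, ‖P.coeff n‖^2 * (sk k)^(2*n))
        atTop (nhds (∑ n ∈ Finset.range N, ‖P.coeff n‖^2)) := by
      have : ∀ n ∈ Finset.range N, Tendsto (fun k => ‖P.coeff n‖^2 * (sk k)^(2*n))
          atTop (nhds (‖P.coeff n‖^2)) := by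
        intro n _
        have := (hsktendsto.pow (2*n)).const_mul (‖P.coeff n‖^2)
        simpa using this
      exact tendsto_finset_sum _ this
    exact le_of_tendsto htend (Filter.Eventually.of_forall hbound)
  -- summability of weights for Q
  have ha_shift : Summable (fun n => ‖P.coeff (n+1)‖ ^ 2) := (summable_nat_add_iff 1).2 ha_sq
  have hw : Summable (fun n : ℕ => ‖Q.coeff n‖^2 / (((n:ℝ)+1) * ((n:ℝ)+2))) := by
    apply Summable.of_nonneg_of_le (fun n => by positivity) _ ha_shift
    intro n
    rw [hcoeff n, norm_mul]
    have h1 : ‖((n:ℂ)+1)‖ = (n:ℝ)+1 := by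
      rw [show ((n:ℂ)+1) = ((n+1 : ℕ) : ℂ) by push_cast; ring, Complex.norm_natCast]
      push_cast; ring
    rw [h1, mul_pow, div_le_iff₀ (by positivity)]
    have h2 : ((n:ℝ)+1)^2 ≤ ((n:ℝ)+1) * ((n:ℝ)+2) := by
      nlinarith [Nat.cast_nonneg (α := ℝ) n]
    nlinarith [sq_nonneg ‖P.coeff (n+1)‖]
  have hφmeas : Measurable (deriv f) := measurable_deriv f
  set W : ℝ := π * ∑' n : ℕ, ‖Q.coeff n‖ ^ 2 / (((n:ℝ) + 1) * ((n:ℝ) + 2)) with hW_def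
  have harea : ∀ r : ℝ, 0 < r → r < 1 →
      IntegrableOn (fun z : ℂ => (1 - ‖z‖^2) * ‖deriv f z‖^2)
        (Metric.closedBall 0 r) volume ∧
      ∫ z in Metric.closedBall (0:ℂ) r, (1 - ‖z‖^2) * ‖deriv f z‖^2 ≤ W := by
    intro r hr0 hr1
    have hsub : Metric.closedBall (0:ℂ) r ⊆ Metric.ball 0 1 := Metric.closedBall_subset_ball hr1
    have hgcont : ContinuousOn (deriv f) (Metric.closedBall (0:ℂ) r) :=
      (hA'.continuousOn).mono hsub
    constructor
    · apply ContinuousOn.integrableOn_compact (isCompact_closedBall _ _)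
      exact ((continuous_const.sub (continuous_norm.pow 2)).continuousOn).mul (hgcont.norm.pow 2)
    · apply area_bound' hr0 hr1 hφmeas hgcont ?_ hw
      intro s hs0 hsr
      have hs1 : s < 1 := lt_of_le_of_lt hsr hr1
      set R : ℝ≥0 := ((1+s)/2 : ℝ).toNNReal with hR_def
      have hRs : s < (R:ℝ) := by
        rw [hR_def, Real.coe_toNNReal _ (by linarith)]; linarith
      have hR0 : 0 < R := by rw [← NNReal.coe_lt_coe]; push_cast; linarith
      have hR1 : (R:ℝ) < 1 := by
        rw [hR_def, Real.coe_toNNReal _ (by linarith)]; linarith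
      have hqs := hQ R hR0 hR1
      refine ⟨summable_coeff_norm hqs hs0.le hRs, fun θ => ?_⟩
      apply hasSum_coeff_pow hqs
      rw [norm_mul, Complex.norm_exp_ofReal_mul_I,
        mul_one, Complex.norm_real, Real.norm_eq_abs, abs_of_pos hs0]
      exact hRs
  have hGmeas : Measurable (fun z : ℂ => (1 - ‖z‖^2) * ‖deriv f z‖^2) :=
    (measurable_const.sub ((measurable_id.norm).pow measurable_const)).mul
      ((hφmeas.norm).pow measurable_const)
  have hGnn : ∀ z ∈ Metric.ball (0:ℂ) 1, 0 ≤ (1 - ‖z‖^2) * ‖deriv f z‖^2 := by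
    intro z hz
    rw [Metric.mem_ball, dist_zero_right] at hz
    have h1 : ‖z‖^2 ≤ 1 := by nlinarith [norm_nonneg z]
    have := sq_nonneg ‖deriv f z‖
    nlinarith
  have hInt : IntegrableOn (fun z : ℂ => (1 - ‖z‖^2) * ‖deriv f z‖^2)
      (Metric.ball (0:ℂ) 1) volume :=
    integrableOn_ball_of_bound hGmeas hGnn harea
  -- nonvanishing of deriv f
  have hnonzero : ∃ z ∈ Metric.ball (0:ℂ) 1, deriv f z ≠ 0 := by
    by_contra hcon
    push_neg at hcon
    obtain ⟨z, hz, w, hwmem, hne⟩ := hf_nc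
    apply hne
    apply (convex_ball (0:ℂ) 1).is_const_of_fderivWithin_eq_zero hd _ hz hwmem
    intro x hx
    rw [fderivWithin_of_isOpen isOpen_ball hx]
    ext y
    simp only [ContinuousLinearMap.zero_apply]
    rw [← toSpanSingleton_deriv]
    simp [hcon x hx]
  exact ⟨deriv f, fun z hz => (hA' z hz).differentiableAt, hnonzero, hInt,
    fun z hz => rfl⟩
end

section
/- (Strong form of the Schwarz–Pick lemma at the boundary) Let f : 𝔻 → 𝔻 be holomorphic. If there exists a sequence (z_n) in 𝔻 with |z_n| → 1 such that f^h(z_n) = 1 + o((1 − |z_n|)²) as n → ∞ (i.e. (1 − f^h(z_n))/(1 − |z_n|)² → 0), then f is a conformal automorphism of 𝔻. -/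
open Metric Filter

/-- The hyperbolic derivative `f^h(z) = (1 − |z|²)|f'(z)|/(1 − |f(z)|²)`. -/
noncomputable def hDeriv (f : ℂ → ℂ) (z : ℂ) : ℝ :=
  (1 - ‖z‖ ^ 2) * ‖deriv f z‖ / (1 - ‖f z‖ ^ 2)


open Set Complex

local notation "conj'" => (starRingEnd ℂ)

/-- The Möbius map `T a w = (a - w)/(1 - conj a * w)`. -/
noncomputable def Tm (a w : ℂ) : ℂ := (a - w) / (1 - conj' a * w)

lemma nsq (z : ℂ) : ‖z‖ ^ 2 = Complex.normSq z := by
  rw [Complex.sq_norm]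

lemma Tm_denom_ne (a w : ℂ) (ha : ‖a‖ < 1) (hw : ‖w‖ < 1) :
    1 - conj' a * w ≠ 0 := by
  intro h
  have h1 : (1 : ℂ) = conj' a * w := by linear_combination h
  have : (1 : ℝ) = ‖a‖ * ‖w‖ := by
    calc (1:ℝ) = ‖(1:ℂ)‖ := by simp
    _ = ‖conj' a * w‖ := by rw [h1]
    _ = ‖a‖ * ‖w‖ := by rw [norm_mul, RCLike.norm_conj]
  nlinarith [norm_nonneg a, norm_nonneg w]

lemma Tm_norm_identity (a w : ℂ) :
    ‖1 - conj' a * w‖ ^ 2 - ‖a - w‖ ^ 2 = (1 - ‖a‖ ^ 2) * (1 - ‖w‖ ^ 2) := by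
  simp only [nsq]
  simp only [Complex.normSq_apply, Complex.sub_re, Complex.sub_im, Complex.mul_re,
    Complex.mul_im, Complex.one_re, Complex.one_im, Complex.conj_re, Complex.conj_im]
  ring

lemma Tm_norm_sq (a w : ℂ) (ha : ‖a‖ < 1) (hw : ‖w‖ < 1) :
    1 - ‖Tm a w‖ ^ 2 = (1 - ‖a‖ ^ 2) * (1 - ‖w‖ ^ 2) / ‖1 - conj' a * w‖ ^ 2 := by
  have hd := Tm_denom_ne a w ha hw
  have hdpos : 0 < ‖1 - conj' a * w‖ ^ 2 := pow_pos (norm_pos_iff.mpr hd) 2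
  have : ‖Tm a w‖ ^ 2 = ‖a - w‖ ^ 2 / ‖1 - conj' a * w‖ ^ 2 := by
    rw [Tm, norm_div, div_pow]
  rw [this, eq_div_iff hdpos.ne', sub_mul, div_mul_cancel₀ _ hdpos.ne',
    ← Tm_norm_identity a w]
  ring

lemma Tm_mem_ball (a w : ℂ) (ha : ‖a‖ < 1) (hw : ‖w‖ < 1) : ‖Tm a w‖ < 1 := by
  have h := Tm_norm_sq a w ha hw
  have h1 : 0 < (1 - ‖a‖ ^ 2) * (1 - ‖w‖ ^ 2) / ‖1 - conj' a * w‖ ^ 2 := by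
    have hd := Tm_denom_ne a w ha hw
    have h2 : 0 < ‖1 - conj' a * w‖ ^ 2 := pow_pos (norm_pos_iff.mpr hd) 2
    have ha2 : ‖a‖ ^ 2 < 1 := by nlinarith [norm_nonneg a]
    have hw2 : ‖w‖ ^ 2 < 1 := by nlinarith [norm_nonneg w]
    exact div_pos (mul_pos (by linarith) (by linarith)) h2
  nlinarith [norm_nonneg (Tm a w)]

lemma Tm_self (a : ℂ) : Tm a a = 0 := by simp [Tm]

lemma Tm_zero (a : ℂ) : Tm a 0 = a := by simp [Tm]

lemma Tm_invol (a w : ℂ) (ha : ‖a‖ < 1) (hw : ‖w‖ < 1) : Tm a (Tm a w) = w := by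
  have hd := Tm_denom_ne a w ha hw
  have hd2 := Tm_denom_ne a (Tm a w) ha (Tm_mem_ball a w ha hw)
  simp only [Tm] at hd2 ⊢
  rw [div_eq_iff hd2]
  have hca : conj' a * a = ((‖a‖ : ℂ)) ^ 2 := RCLike.conj_mul a
  field_simp at hd2 ⊢
  ring

lemma Tm_hasDerivAt (a w : ℂ) (hd : 1 - conj' a * w ≠ 0) :
    HasDerivAt (fun x => Tm a x) ((conj' a * a - 1) / (1 - conj' a * w) ^ 2) w := by
  have h1 : HasDerivAt (fun x : ℂ => a - x) (-1) w := by
    simpa using (hasDerivAt_id w).const_sub a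
  have h2 : HasDerivAt (fun x : ℂ => 1 - conj' a * x) (-(conj' a)) w := by
    simpa using ((hasDerivAt_id w).const_mul (conj' a)).const_sub 1
  have H := h1.div h2 hd
  refine (H : HasDerivAt (fun x => Tm a x) _ w).congr_deriv ?_
  ring

lemma conj_mul_sub_one_norm (c : ℂ) (hc : ‖c‖ < 1) :
    ‖conj' c * c - 1‖ = 1 - ‖c‖ ^ 2 := by
  have h : conj' c * c = ((‖c‖ ^ 2 : ℝ) : ℂ) := by
    rw [RCLike.conj_mul]; norm_cast
  have h2 : conj' c * c - 1 = (((‖c‖ ^ 2 - 1 : ℝ)) : ℂ) := by rw [h]; norm_cast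
  rw [h2, Complex.norm_real, Real.norm_eq_abs, abs_of_nonpos (by nlinarith [norm_nonneg c])]
  ring

/-- Quadratic pseudo-hyperbolic estimate. -/
lemma pseudo_bound (b c : ℂ) (r : ℝ) (hb : ‖b‖ < 1) (hc1 : ‖c‖ ≤ 1)
    (hr0 : 0 ≤ r) (hr1 : r < 1) (h : ‖c - b‖ ≤ r * ‖1 - conj' c * b‖) :
    ‖c‖ * (1 + ‖b‖ * r) ≤ ‖b‖ + r := by
  set x := ‖c‖ with hx
  set β := ‖b‖ with hβ
  have hx0 : 0 ≤ x := norm_nonneg c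
  have hβ0 : 0 ≤ β := norm_nonneg b
  set t := (c * conj' b).re with ht
  have htle : t ≤ x * β := by
    calc t ≤ |(c * conj' b).re| := le_abs_self _
    _ ≤ ‖c * conj' b‖ := by exact Complex.abs_re_le_norm _
    _ = x * β := by rw [norm_mul, RCLike.norm_conj]
  have hsq : ‖c - b‖ ^ 2 ≤ (r * ‖1 - conj' c * b‖) ^ 2 := by
    apply pow_le_pow_left₀ (norm_nonneg _) h
  have e1 : ‖c - b‖ ^ 2 = x ^ 2 + β ^ 2 - 2 * t := by
    rw [nsq, Complex.normSq_sub]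
    simp only [hx, hβ, nsq, ht]
    try ring
  have e2 : ‖1 - conj' c * b‖ ^ 2 = 1 + x ^ 2 * β ^ 2 - 2 * t := by
    rw [nsq, Complex.normSq_sub]
    have : conj' (conj' c * b) = c * conj' b := by
      rw [map_mul, Complex.conj_conj]
    rw [this]
    simp only [one_mul, Complex.normSq_one, Complex.normSq_mul]
    simp only [nsq, ht, Complex.normSq_conj]
    rw [← nsq c, ← nsq b]
    try ring
  rw [e1, mul_pow, e2] at hsq
  have h1r2 : (0:ℝ) ≤ 1 - r ^ 2 := by nlinarith
  have hQ : (1 - r ^ 2 * β ^ 2) * x ^ 2 - 2 * β * (1 - r ^ 2) * x + (β ^ 2 - r ^ 2) ≤ 0 := by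
    nlinarith [mul_le_mul_of_nonneg_left htle (by linarith : (0:ℝ) ≤ 2 * (1 - r ^ 2))]
  by_contra hcon
  push_neg at hcon
  have hB : 0 < (1 + r * β) * x - (β + r) := by nlinarith
  have hβx : β * x ≤ 1 := by nlinarith
  have hA : 0 < (1 - r * β) * x - (β - r) := by
    nlinarith [mul_nonneg hr0 (by linarith : (0:ℝ) ≤ 1 - β * x)]
  nlinarith [mul_pos hA hB, hQ]

/-- Schwarz–Pick two point estimate for a self-map of the unit disk. -/
lemma two_point (u : ℂ → ℂ) (hd : DifferentiableOn ℂ u (ball 0 1))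
    (hm : ∀ w ∈ ball (0 : ℂ) 1, ‖u w‖ < 1) {z : ℂ} (hz : z ∈ ball (0 : ℂ) 1) :
    ‖u 0 - u z‖ ≤ ‖z‖ * ‖1 - conj' (u 0) * u z‖ := by
  have h0 : (0 : ℂ) ∈ ball (0 : ℂ) 1 := by simp
  have hu0 : ‖u 0‖ < 1 := hm 0 h0
  set v : ℂ → ℂ := fun w => Tm (u 0) (u w) with hv
  have hvd : DifferentiableOn ℂ v (ball 0 1) := by
    intro w hw
    have h1 : DifferentiableAt ℂ (fun x => Tm (u 0) x) (u w) := by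
      have hden := Tm_denom_ne (u 0) (u w) hu0 (hm w hw)
      simp only [Tm]
      exact DifferentiableAt.div ((differentiableAt_const _).sub
        differentiableAt_id) ((differentiableAt_const _).sub
        (differentiableAt_id.const_mul _)) hden
    exact DifferentiableAt.comp_differentiableWithinAt w h1 (hd w hw)
  have hvm : MapsTo v (ball (0:ℂ) 1) (ball (v 0) 1) := by
    intro w hw
    have : v 0 = 0 := by simp [hv, Tm_self]
    rw [this, mem_ball_zero_iff]
    exact Tm_mem_ball _ _ hu0 (hm w hw)
  have hv0 : v 0 = 0 := by simp [hv, Tm_self]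
  have := Complex.dist_le_div_mul_dist_of_mapsTo_ball hvd (hvm.mono_right ball_subset_closedBall) hz
  rw [hv0, div_self one_ne_zero, one_mul, dist_zero_right, dist_zero_right] at this
  -- ‖v z‖ ≤ ‖z‖
  have hden := Tm_denom_ne (u 0) (u z) hu0 (hm z hz)
  have hnorm : ‖v z‖ = ‖u 0 - u z‖ / ‖1 - conj' (u 0) * u z‖ := by
    simp [hv, Tm, norm_div]
  rw [hnorm, div_le_iff₀ (norm_pos_iff.mpr hden)] at this
  linarith [this]

lemma two_point_zero (u : ℂ → ℂ) (hd : DifferentiableOn ℂ u (ball 0 1))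
    (hm : ∀ w ∈ ball (0 : ℂ) 1, ‖u w‖ < 1) {z : ℂ} (hz : z ∈ ball (0 : ℂ) 1) :
    ‖u 0‖ * (1 + ‖u z‖ * ‖z‖) ≤ ‖u z‖ + ‖z‖ :=
  pseudo_bound (u z) (u 0) ‖z‖ (hm z hz) (le_of_lt (hm 0 (by simp)))
    (norm_nonneg z) (mem_ball_zero_iff.1 hz) (two_point u hd hm hz)

lemma two_point_pt (u : ℂ → ℂ) (hd : DifferentiableOn ℂ u (ball 0 1))
    (hm : ∀ w ∈ ball (0 : ℂ) 1, ‖u w‖ < 1) {z : ℂ} (hz : z ∈ ball (0 : ℂ) 1) :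
    ‖u z‖ * (1 + ‖u 0‖ * ‖z‖) ≤ ‖u 0‖ + ‖z‖ := by
  have h := two_point u hd hm hz
  rw [norm_sub_rev] at h
  have hnorm : ‖1 - conj' (u z) * u 0‖ = ‖1 - conj' (u 0) * u z‖ := by
    rw [← RCLike.norm_conj (1 - conj' (u z) * u 0)]
    congr 1
    simp only [map_sub, map_mul, map_one, Complex.conj_conj]
    ring
  exact pseudo_bound (u 0) (u z) ‖z‖ (hm 0 (by simp)) (le_of_lt (hm z hz))
    (norm_nonneg z) (mem_ball_zero_iff.1 hz) (by rw [hnorm]; exact h)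

lemma norm_one_sub_conj_mul_self (b : ℂ) (hb : ‖b‖ < 1) :
    ‖1 - conj' b * b‖ = 1 - ‖b‖ ^ 2 := by
  rw [show (1 : ℂ) - conj' b * b = -(conj' b * b - 1) by ring, norm_neg,
    conj_mul_sub_one_norm b hb]

lemma Tm_differentiableAt (a w : ℂ) (hd : 1 - conj' a * w ≠ 0) :
    DifferentiableAt ℂ (fun x => Tm a x) w := (Tm_hasDerivAt a w hd).differentiableAt

lemma real_aux (s d u v A : ℝ) (hu : u ≠ 0) (hv : v ≠ 0) (hA : A ≠ 0) :
    s * (u / A * d) / (u * v / A) = s * d / v := by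
  field_simp

lemma real_aux2 (d s v : ℝ) (hv : v ≠ 0) :
    v / v ^ 2 * (d * s) = s * d / v := by
  field_simp

/-- `hDeriv` is invariant under postcomposition with a disk automorphism. -/
lemma hDeriv_Tm_comp (f : ℂ → ℂ) (a : ℂ) (ha : ‖a‖ < 1) {z : ℂ}
    (hfd : DifferentiableAt ℂ f z) (hfz : ‖f z‖ < 1) :
    hDeriv (fun w => Tm a (f w)) z = hDeriv f z := by
  have hden := Tm_denom_ne a (f z) ha hfz
  have hT := Tm_hasDerivAt a (f z) hden
  have hg : HasDerivAt (fun w => Tm a (f w))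
      ((conj' a * a - 1) / (1 - conj' a * f z) ^ 2 * deriv f z) z := by
    have := HasDerivAt.comp z hT hfd.hasDerivAt
    simpa [Function.comp_def] using this
  have hDpos : (0 : ℝ) < ‖1 - conj' a * f z‖ ^ 2 := pow_pos (norm_pos_iff.mpr hden) 2
  have ha2 : (0 : ℝ) < 1 - ‖a‖ ^ 2 := by nlinarith [norm_nonneg a]
  have hf2 : (0 : ℝ) < 1 - ‖f z‖ ^ 2 := by nlinarith [norm_nonneg (f z)]
  simp only [hDeriv]
  rw [hg.deriv, norm_mul, norm_div, norm_pow, conj_mul_sub_one_norm a ha,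
    Tm_norm_sq a (f z) ha hfz]
  exact real_aux (1 - ‖z‖ ^ 2) ‖deriv f z‖ (1 - ‖a‖ ^ 2) (1 - ‖f z‖ ^ 2)
    (‖1 - conj' a * f z‖ ^ 2) ha2.ne' hf2.ne' hDpos.ne'

lemma final_numeric (k r m X t : ℝ) (hk0 : 0 ≤ k) (hk1 : k < 1) (hr0 : 0 ≤ r) (hr1 : r < 1)
    (hm0 : 0 ≤ m) (hm1 : m < 1) (hX0 : 0 ≤ X) (hX1 : X < 1) (ht0 : 0 ≤ t) (htm : t ≤ m)
    (hmeq : m * (1 + k * r) = k + r) (hPH : X * (1 + t * r) ≤ t + r) :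
    (1 - k) * (1 - r) ^ 2 / 4 ≤ 1 - X := by
  have hXm : X * (1 + m * r) ≤ m + r := by
    nlinarith [mul_nonneg hr0 (sub_nonneg.mpr htm)]
  have h2 : (1 - m) * (1 + k * r) = (1 - k) * (1 - r) := by linear_combination -hmeq
  have hkr2 : k * r ≤ 1 := by nlinarith
  have h3 : (1 - k) * (1 - r) ≤ 2 * (1 - m) := by
    nlinarith [mul_nonneg (by linarith : (0:ℝ) ≤ 1 - m) (by linarith : (0:ℝ) ≤ 1 - k * r)]
  have e1 : (1 - m) * (1 - r) ≤ (1 - X) * (1 + m * r) := by nlinarith [hXm]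
  have hmr2 : m * r ≤ 1 := by nlinarith
  have h4 : (1 - m) * (1 - r) ≤ 2 * (1 - X) := by
    nlinarith [mul_nonneg (by linarith : (0:ℝ) ≤ 1 - X) (by linarith : (0:ℝ) ≤ 1 - m * r)]
  nlinarith [mul_le_mul_of_nonneg_right h3 (by linarith : (0:ℝ) ≤ 1 - r), h4]

/-- Core quantitative bound. -/
lemma core_bound (g : ℂ → ℂ) (hgd : DifferentiableOn ℂ g (ball 0 1)) (hg0 : g 0 = 0)
    (hgm : ∀ w ∈ ball (0 : ℂ) 1, ‖g w‖ < 1)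
    (hsl : ∀ w ∈ ball (0 : ℂ) 1, ‖dslope g 0 w‖ < 1)
    {z : ℂ} (hz : z ∈ ball (0 : ℂ) 1) :
    (1 - ‖deriv g 0‖) * (1 - ‖z‖) ^ 2 / 4 ≤ 1 - hDeriv g z := by
  have h0mem : (0 : ℂ) ∈ ball (0 : ℂ) 1 := by simp
  have hk1 : ‖deriv g 0‖ < 1 := by have := hsl 0 h0mem; rwa [dslope_same] at this
  have hk0 : (0:ℝ) ≤ ‖deriv g 0‖ := norm_nonneg _
  have hr1 : ‖z‖ < 1 := mem_ball_zero_iff.1 hz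
  have hr0 : (0:ℝ) ≤ ‖z‖ := norm_nonneg z
  by_cases hz0 : z = 0
  · subst hz0
    have hd0 : hDeriv g 0 = ‖deriv g 0‖ := by simp [hDeriv, hg0]
    rw [hd0, norm_zero]
    nlinarith
  have hrpos : (0:ℝ) < ‖z‖ := norm_pos_iff.mpr hz0
  have hzne : ‖z‖ ≠ 0 := hrpos.ne'
  have hdq : DifferentiableOn ℂ (dslope g 0) (ball 0 1) :=
    (differentiableOn_dslope (ball_mem_nhds _ one_pos)).mpr hgd
  have hq0 : ‖dslope g 0 0‖ = ‖deriv g 0‖ := by rw [dslope_same]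
  have hkr : (0 : ℝ) < 1 + ‖deriv g 0‖ * ‖z‖ := by nlinarith
  set m := (‖deriv g 0‖ + ‖z‖) / (1 + ‖deriv g 0‖ * ‖z‖) with hmdef
  have hmeq : m * (1 + ‖deriv g 0‖ * ‖z‖) = ‖deriv g 0‖ + ‖z‖ := by
    rw [hmdef]; field_simp
  have hm0 : 0 ≤ m := div_nonneg (by linarith) (by linarith)
  have hm1 : m < 1 := by rw [hmdef, div_lt_one hkr]; nlinarith
  have hqz : ‖dslope g 0 z‖ ≤ m := by
    have := two_point_pt (dslope g 0) hdq hsl hz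
    rw [hq0] at this
    rw [hmdef, le_div_iff₀ hkr]
    nlinarith [this]
  have hqz' : dslope g 0 z = g z / z := by
    rw [dslope_of_ne g hz0, slope_def_field, hg0, sub_zero, sub_zero]
  have hgznorm : ‖g z‖ = ‖z‖ * ‖dslope g 0 z‖ := by
    rw [hqz', norm_div, mul_comm, div_mul_cancel₀ _ hzne]
  have hb : ‖g z‖ < 1 := hgm z hz
  have hbb := Tm_denom_ne (g z) (g z) hb hb
  set Ψ : ℂ → ℂ := fun ζ => Tm (g z) (g (Tm z ζ)) with hΨdef
  have hgat : ∀ w ∈ ball (0 : ℂ) 1, DifferentiableAt ℂ g w := fun w hw =>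
    hgd.differentiableAt (isOpen_ball.mem_nhds hw)
  have hΨd : DifferentiableOn ℂ Ψ (ball 0 1) := by
    intro w hw
    have hw1 : ‖w‖ < 1 := mem_ball_zero_iff.1 hw
    have h1 : DifferentiableAt ℂ (fun x => Tm z x) w :=
      Tm_differentiableAt z w (Tm_denom_ne z w hr1 hw1)
    have hTw : ‖Tm z w‖ < 1 := Tm_mem_ball z w hr1 hw1
    have h2 : DifferentiableAt ℂ g (Tm z w) := hgat _ (mem_ball_zero_iff.2 hTw)
    have h3 : DifferentiableAt ℂ (fun x => Tm (g z) x) (g (Tm z w)) :=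
      Tm_differentiableAt (g z) _ (Tm_denom_ne (g z) _ hb (hgm _ (mem_ball_zero_iff.2 hTw)))
    have h4 : DifferentiableAt ℂ ((fun x => Tm (g z) x) ∘ g ∘ fun x => Tm z x) w :=
      DifferentiableAt.comp w h3 (DifferentiableAt.comp w h2 h1)
    have h5 : DifferentiableAt ℂ Ψ w := by
      simpa only [hΨdef, Function.comp_def] using h4
    exact h5.differentiableWithinAt
  have hΨ0 : Ψ 0 = 0 := by
    show Tm (g z) (g (Tm z 0)) = 0
    rw [Tm_zero, Tm_self]
  have hΨmem : ∀ w ∈ ball (0 : ℂ) 1, ‖Ψ w‖ < 1 := by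
    intro w hw
    have hw1 : ‖w‖ < 1 := mem_ball_zero_iff.1 hw
    have hTw : ‖Tm z w‖ < 1 := Tm_mem_ball z w hr1 hw1
    exact Tm_mem_ball (g z) _ hb (hgm _ (mem_ball_zero_iff.2 hTw))
  have hΨm : MapsTo Ψ (ball (0 : ℂ) 1) (ball (Ψ 0) 1) := by
    intro w hw
    rw [hΨ0, mem_ball_zero_iff]
    exact hΨmem w hw
  have hHd : DifferentiableOn ℂ (dslope Ψ 0) (ball 0 1) :=
    (differentiableOn_dslope (ball_mem_nhds _ one_pos)).mpr hΨd
  have hH1 : ∀ w ∈ ball (0 : ℂ) 1, ‖dslope Ψ 0 w‖ ≤ 1 := by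
    intro w hw
    have := Complex.norm_dslope_le_div_of_mapsTo_ball hΨd (hΨm.mono_right ball_subset_closedBall) hw
    simpa using this
  have hΨz : Ψ z = g z := by
    show Tm (g z) (g (Tm z z)) = g z
    rw [Tm_self, hg0, Tm_zero]
  have hHz : ‖dslope Ψ 0 z‖ ≤ m := by
    rw [dslope_of_ne Ψ hz0, slope_def_field, hΨ0, sub_zero, sub_zero, norm_div,
      hΨz, hgznorm, mul_div_assoc, mul_comm, div_mul_cancel₀ _ hzne]
    exact hqz
  have hHlt : ∀ w ∈ ball (0 : ℂ) 1, ‖dslope Ψ 0 w‖ < 1 := by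
    intro w hw
    rcases lt_or_eq_of_le (hH1 w hw) with heq | heq
    · exact heq
    · exfalso
      have hmax : IsMaxOn (norm ∘ dslope Ψ 0) (ball (0 : ℂ) 1) w := by
        intro y hy
        simp only [Function.comp_apply, heq]
        exact hH1 y hy
      have hconst := Complex.eqOn_of_isPreconnected_of_isMaxOn_norm
        (convex_ball (0 : ℂ) 1).isPreconnected isOpen_ball hHd hw hmax
      have h5 : ‖dslope Ψ 0 z‖ = 1 := by
        rw [show dslope Ψ 0 z = dslope Ψ 0 w from hconst hz]
        exact heq
      rw [h5] at hHz
      linarith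
  -- the chain rule : ‖dslope Ψ 0 0‖ = hDeriv g z
  have hH0 : ‖dslope Ψ 0 0‖ = hDeriv g z := by
    have hT1 := Tm_hasDerivAt z 0 (by simp)
    have hgz : HasDerivAt g (deriv g z) (Tm z 0) := by
      rw [Tm_zero]; exact (hgat z hz).hasDerivAt
    have hφ := HasDerivAt.comp 0 hgz hT1
    have hT2 : HasDerivAt (fun x => Tm (g z) x)
        ((conj' (g z) * g z - 1) / (1 - conj' (g z) * g z) ^ 2)
        ((g ∘ fun x => Tm z x) 0) := by
      simp only [Function.comp_apply, Tm_zero]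
      exact Tm_hasDerivAt (g z) (g z) hbb
    have hΨder := HasDerivAt.comp 0 hT2 hφ
    have hΨder' : HasDerivAt Ψ ((conj' (g z) * g z - 1) / (1 - conj' (g z) * g z) ^ 2 *
        (deriv g z * ((conj' z * z - 1) / (1 - conj' z * 0) ^ 2))) 0 := by
      simpa [hΨdef, Function.comp_def] using hΨder
    rw [dslope_same, hΨder'.deriv]
    have hb2 : (0 : ℝ) < 1 - ‖g z‖ ^ 2 := by nlinarith [norm_nonneg (g z)]
    rw [norm_mul, norm_mul, norm_div, norm_div, norm_pow, norm_pow,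
      conj_mul_sub_one_norm (g z) hb, conj_mul_sub_one_norm z hr1,
      norm_one_sub_conj_mul_self (g z) hb]
    simp only [mul_zero, sub_zero, norm_one, one_pow, div_one]
    simp only [hDeriv]
    exact real_aux2 ‖deriv g z‖ (1 - ‖z‖ ^ 2) (1 - ‖g z‖ ^ 2) hb2.ne'
  -- final numeric estimate
  have hX0 : 0 ≤ hDeriv g z := by rw [← hH0]; exact norm_nonneg _
  have hX1 : hDeriv g z < 1 := by rw [← hH0]; exact hHlt 0 h0mem
  have hPH := two_point_zero (dslope Ψ 0) hHd hHlt hz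
  rw [hH0] at hPH
  exact final_numeric ‖deriv g 0‖ ‖z‖ m (hDeriv g z) ‖dslope Ψ 0 z‖ hk0 hk1 hr0 hr1
    hm0 hm1 hX0 hX1 (norm_nonneg _) hHz hmeq hPH

/-- **Strong form of the Schwarz–Pick lemma at the boundary.** Let `f` be a
holomorphic self-map of the open unit disk. If there is a sequence `(z_n)` in the
disk with `|z_n| → 1` and `f^h(z_n) = 1 + o((1 − |z_n|)²)`, then `f` is a conformal
automorphism of the disk. -/
theorem schwarz_pick_boundary_rigidity (f : ℂ → ℂ)
    (hf_diff : ∀ z ∈ Metric.ball (0 : ℂ) 1, DifferentiableAt ℂ f z)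
    (hf_maps : ∀ z ∈ Metric.ball (0 : ℂ) 1, ‖f z‖ < 1)
    (z : ℕ → ℂ) (hz_mem : ∀ n, z n ∈ Metric.ball (0 : ℂ) 1)
    (hz_bd : Tendsto (fun n => ‖z n‖) atTop (nhds 1))
    (hlittleo : Tendsto (fun n => (1 - hDeriv f (z n)) / (1 - ‖z n‖) ^ 2)
      atTop (nhds 0)) :
    ∃ (η : ℂ) (z₀ : ℂ), ‖η‖ = 1 ∧ ‖z₀‖ < 1 ∧
      ∀ w ∈ Metric.ball (0 : ℂ) 1,
        f w = η * (z₀ - w) / (1 - (starRingEnd ℂ) z₀ * w) := by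
  have h0mem : (0 : ℂ) ∈ ball (0 : ℂ) 1 := by simp
  have ha1 : ‖f 0‖ < 1 := hf_maps 0 h0mem
  set g : ℂ → ℂ := fun w => Tm (f 0) (f w) with hgdef
  have hg0 : g 0 = 0 := by show Tm (f 0) (f 0) = 0; exact Tm_self _
  have hgm : ∀ w ∈ ball (0 : ℂ) 1, ‖g w‖ < 1 := fun w hw =>
    Tm_mem_ball _ _ ha1 (hf_maps w hw)
  have hgd : DifferentiableOn ℂ g (ball 0 1) := by
    intro w hw
    have h3 := Tm_differentiableAt (f 0) (f w) (Tm_denom_ne _ _ ha1 (hf_maps w hw))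
    have h4 := DifferentiableAt.comp w h3 (hf_diff w hw)
    have h5 : DifferentiableAt ℂ g w := by
      simpa only [hgdef, Function.comp_def] using h4
    exact h5.differentiableWithinAt
  have hgder : ∀ n, hDeriv g (z n) = hDeriv f (z n) := fun n =>
    hDeriv_Tm_comp f (f 0) ha1 (hf_diff _ (hz_mem n)) (hf_maps _ (hz_mem n))
  have hgmaps : MapsTo g (ball (0 : ℂ) 1) (ball (g 0) 1) := by
    intro w hw
    rw [hg0, mem_ball_zero_iff]
    exact hgm w hw
  have hH1 : ∀ w ∈ ball (0 : ℂ) 1, ‖dslope g 0 w‖ ≤ 1 := by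
    intro w hw
    have := Complex.norm_dslope_le_div_of_mapsTo_ball hgd (hgmaps.mono_right ball_subset_closedBall) hw
    simpa using this
  by_cases hcase : ∀ w ∈ ball (0 : ℂ) 1, ‖dslope g 0 w‖ < 1
  · exfalso
    have hk1 : ‖deriv g 0‖ < 1 := by
      have := hcase 0 h0mem; rwa [dslope_same] at this
    have hclaim : ∀ n, (1 - ‖deriv g 0‖) / 4 ≤ (1 - hDeriv f (z n)) / (1 - ‖z n‖) ^ 2 := by
      intro n
      have hc := core_bound g hgd hg0 hgm hcase (hz_mem n)
      rw [hgder n] at hc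
      have hr1 : ‖z n‖ < 1 := mem_ball_zero_iff.1 (hz_mem n)
      rw [le_div_iff₀ (by nlinarith : (0:ℝ) < (1 - ‖z n‖) ^ 2)]
      calc (1 - ‖deriv g 0‖) / 4 * (1 - ‖z n‖) ^ 2
          = (1 - ‖deriv g 0‖) * (1 - ‖z n‖) ^ 2 / 4 := by ring
        _ ≤ 1 - hDeriv f (z n) := hc
    have hle := ge_of_tendsto hlittleo (Filter.Eventually.of_forall hclaim)
    linarith
  · push_neg at hcase
    obtain ⟨w₀, hw₀, hn⟩ := hcase
    have hn1 : ‖dslope g 0 w₀‖ = 1 := le_antisymm (hH1 w₀ hw₀) hn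
    have hHd : DifferentiableOn ℂ (dslope g 0) (ball 0 1) :=
      (differentiableOn_dslope (ball_mem_nhds _ one_pos)).mpr hgd
    have hmax : IsMaxOn (norm ∘ dslope g 0) (ball (0 : ℂ) 1) w₀ := by
      intro y hy
      simp only [Function.comp_apply, hn1]
      exact hH1 y hy
    have hconst := Complex.eqOn_of_isPreconnected_of_isMaxOn_norm
      (convex_ball (0 : ℂ) 1).isPreconnected isOpen_ball hHd hw₀ hmax
    refine ⟨dslope g 0 w₀, conj' (dslope g 0 w₀) * f 0, hn1, ?_, ?_⟩
    · rw [norm_mul, RCLike.norm_conj, hn1, one_mul]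
      exact ha1
    · intro w hw
      have hgw : g w = dslope g 0 w₀ * w := by
        by_cases hw0 : w = 0
        · subst hw0; rw [hg0]; ring
        · have h1 : dslope g 0 w = dslope g 0 w₀ := hconst hw
          rw [dslope_of_ne g hw0, slope_def_field, hg0, sub_zero, sub_zero,
            div_eq_iff hw0] at h1
          rw [h1, mul_comm]
      have hfw : f w = Tm (f 0) (g w) := by
        show f w = Tm (f 0) (Tm (f 0) (f w))
        rw [Tm_invol _ _ ha1 (hf_maps w hw)]
      rw [hfw, hgw]
      have hηη : dslope g 0 w₀ * conj' (dslope g 0 w₀) = 1 := by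
        rw [Complex.mul_conj]
        rw [Complex.normSq_eq_norm_sq, hn1]
        norm_num
      show (f 0 - dslope g 0 w₀ * w) / (1 - conj' (f 0) * (dslope g 0 w₀ * w)) =
        dslope g 0 w₀ * (conj' (dslope g 0 w₀) * f 0 - w) /
          (1 - conj' (conj' (dslope g 0 w₀) * f 0) * w)
      rw [map_mul, Complex.conj_conj]
      have hnum : dslope g 0 w₀ * (conj' (dslope g 0 w₀) * f 0 - w) =
          f 0 - dslope g 0 w₀ * w := by linear_combination f 0 * hηη
      rw [hnum]
      congr 1
      ring
end

section
/- (Sharpness of the boundary Schwarz–Pick rigidity) The function f(z) = z², a holomorphic self-map of 𝔻 which is not a conformal automorphism of 𝔻, satisfies f^h(z) = 2|z|/(1 + |z|²) = 1 − (1 − |z|)²/(1 + |z|²) for all z ∈ 𝔻; in particular f^h(z) = 1 + O((1 − |z|)²) as |z| → 1. Hence the error term o((1 − |z_n|)²) in the boundary Schwarz–Pick rigidity theorem cannot be replaced by O((1 − |z_n|)²). -/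
open Metric Filter

theorem sq_mem_ball_zero_one {z : ℂ} (hz : z ∈ ball (0 : ℂ) 1) : z ^ 2 ∈ ball (0 : ℂ) 1 := by
  rw [mem_ball_zero_iff] at hz ⊢
  simpa using pow_lt_one₀ (norm_nonneg z) hz two_ne_zero

theorem hDeriv_sq {z : ℂ} (hz : ‖z‖ ≠ 1) :
    hDeriv (fun w : ℂ => w ^ 2) z = 2 * ‖z‖ / (1 + ‖z‖ ^ 2) := by
  have hpos : 0 < 1 + ‖z‖ := by positivity
  have hne : 1 - ‖z‖ ^ 2 ≠ 0 := by
    rw [show 1 - ‖z‖ ^ 2 = (1 - ‖z‖) * (1 + ‖z‖) by ring]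
    exact mul_ne_zero (sub_ne_zero.mpr (Ne.symm hz)) hpos.ne'
  rw [hDeriv, deriv_pow_field, norm_mul, norm_pow, norm_pow, Complex.norm_natCast]
  rw [show 1 - (‖z‖ ^ 2) ^ 2 = (1 - ‖z‖ ^ 2) * (1 + ‖z‖ ^ 2) by ring]
  field_simp
  ring

theorem two_mul_div_one_add_sq (r : ℝ) : 2 * r / (1 + r ^ 2) = 1 - (1 - r) ^ 2 / (1 + r ^ 2) := by
  have : 0 < 1 + r ^ 2 := by positivity
  field_simp
  ring

theorem abs_one_sub_two_mul_div_one_add_sq_le (r : ℝ) :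
    |1 - 2 * r / (1 + r ^ 2)| ≤ (1 - r) ^ 2 := by
  rw [two_mul_div_one_add_sq, sub_sub_cancel, abs_of_nonneg (by positivity)]
  exact div_le_self (sq_nonneg _) (by nlinarith [sq_nonneg r])

theorem sq_ne_disk_automorphism {η z₀ : ℂ} (hη : ‖η‖ = 1) :
    ¬ ∀ z ∈ ball (0 : ℂ) 1, z ^ 2 = η * (z₀ - z) / (1 - starRingEnd ℂ z₀ * z) := by
  intro h
  have hη0 : η ≠ 0 := norm_ne_zero_iff.mp (by rw [hη]; exact one_ne_zero)
  obtain rfl : z₀ = 0 := by simpa [hη0, eq_comm] using h 0 (mem_ball_self one_pos)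
  -- with `z₀ = 0` the map is `z ↦ -ηz`, and `z = 1/2` forces `‖η‖ = 1/2`
  have hhalf := h (1 / 2) (by rw [mem_ball_zero_iff]; norm_num)
  simp only [one_div, inv_pow, zero_sub, mul_neg, map_zero, zero_mul, sub_zero, div_one] at hhalf
  have : η = -(1 / 2) := by linear_combination 2 * hhalf
  norm_num [this] at hη

/-- **Sharpness of the boundary Schwarz–Pick rigidity.** The map `f(z) = z²` is a
holomorphic self-map of the open unit disk which is not a conformal automorphism, yet
its hyperbolic derivative satisfies `f^h(z) = 2|z|/(1 + |z|²) = 1 − (1 − |z|)²/(1 + |z|²)`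
on the disk; in particular `f^h(z) = 1 + O((1 − |z|)²)` as `|z| → 1`. Hence the error
term `o((1 − |z_n|)²)` in the boundary rigidity theorem cannot be weakened to
`O((1 − |z_n|)²)`. -/
theorem square_map_sharpness :
    (∀ z ∈ Metric.ball (0 : ℂ) 1, (fun w : ℂ => w ^ 2) z ∈ Metric.ball (0 : ℂ) 1) ∧
    (∀ z : ℂ, DifferentiableAt ℂ (fun w : ℂ => w ^ 2) z) ∧
    (¬ ∃ (η : ℂ) (z₀ : ℂ), ‖η‖ = 1 ∧ ‖z₀‖ < 1 ∧
      ∀ z ∈ Metric.ball (0 : ℂ) 1,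
        z ^ 2 = η * (z₀ - z) / (1 - (starRingEnd ℂ) z₀ * z)) ∧
    (∀ z ∈ Metric.ball (0 : ℂ) 1,
      hDeriv (fun w : ℂ => w ^ 2) z = 2 * ‖z‖ / (1 + ‖z‖ ^ 2) ∧
      hDeriv (fun w : ℂ => w ^ 2) z = 1 - (1 - ‖z‖) ^ 2 / (1 + ‖z‖ ^ 2)) ∧
    (∃ C : ℝ, ∀ z ∈ Metric.ball (0 : ℂ) 1,
      |1 - hDeriv (fun w : ℂ => w ^ 2) z| ≤ C * (1 - ‖z‖) ^ 2) := by
  have hDeriv_sq_of_mem {z : ℂ} (hz : z ∈ ball (0 : ℂ) 1) :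
      hDeriv (fun w : ℂ => w ^ 2) z = 2 * ‖z‖ / (1 + ‖z‖ ^ 2) :=
    hDeriv_sq (mem_ball_zero_iff.mp hz).ne
  refine ⟨fun z hz => sq_mem_ball_zero_one hz, fun z => differentiableAt_pow 2,
    fun ⟨η, z₀, hη, _, h⟩ => sq_ne_disk_automorphism hη h, fun z hz => ?_, ⟨1, fun z hz => ?_⟩⟩
  · rw [hDeriv_sq_of_mem hz, ← two_mul_div_one_add_sq]
    exact ⟨rfl, rfl⟩
  · rw [hDeriv_sq_of_mem hz, one_mul]
    exact abs_one_sub_two_mul_div_one_add_sq_le _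
end

section
/- (Boundary Schwarz lemma of Burns and Krantz) Let f : 𝔻 → 𝔻 be holomorphic and suppose that f(z) = z + o(|1 − z|³) as z → 1 within 𝔻, i.e. (f(z) − z)/|1 − z|³ → 0 as z → 1, z ∈ 𝔻. Then f(z) = z for all z ∈ 𝔻. -/
open Metric Filter Complex

noncomputable def mob (a z : ℂ) : ℂ := (z - a) / (1 - (starRingEnd ℂ) a * z)

lemma normSq_key (a z : ℂ) :
    normSq (1 - (starRingEnd ℂ) a * z) = normSq (z - a) + (1 - normSq a) * (1 - normSq z) := by
  simp only [normSq_apply, Complex.sub_re, Complex.sub_im, Complex.mul_re, Complex.mul_im,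
    Complex.conj_re, Complex.conj_im, Complex.one_re, Complex.one_im]
  ring

lemma den_ne {a z : ℂ} (ha : ‖a‖ < 1) (hz : ‖z‖ < 1) : 1 - (starRingEnd ℂ) a * z ≠ 0 := by
  intro h
  have h1 : (1 : ℂ) = (starRingEnd ℂ) a * z := by linear_combination h
  have h2 : (1 : ℝ) = ‖(starRingEnd ℂ) a * z‖ := by rw [← h1]; simp
  rw [norm_mul] at h2
  nlinarith [norm_nonneg a, norm_nonneg z, (RCLike.norm_conj a : ‖(starRingEnd ℂ) a‖ = ‖a‖)]

lemma normSq_lt_one {a : ℂ} (ha : ‖a‖ < 1) : normSq a < 1 := by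
  rw [Complex.normSq_eq_norm_sq]
  nlinarith [norm_nonneg a, ha]

lemma mob_lt_one {a z : ℂ} (ha : ‖a‖ < 1) (hz : ‖z‖ < 1) : ‖mob a z‖ < 1 := by
  have hne := den_ne ha hz
  have h2 : normSq (z - a) < normSq (1 - (starRingEnd ℂ) a * z) := by
    have hk := normSq_key a z
    nlinarith [normSq_lt_one ha, normSq_lt_one hz]
  rw [mob, norm_div, div_lt_one (norm_pos_iff.mpr hne)]
  have e1 : ‖z - a‖ ^ 2 < ‖1 - (starRingEnd ℂ) a * z‖ ^ 2 := by
    rw [← Complex.sq_norm, ← Complex.sq_norm] at h2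
    simpa using h2
  exact lt_of_pow_lt_pow_left₀ 2 (norm_nonneg _) e1

lemma mob_inv {a z : ℂ} (ha : ‖a‖ < 1) (hz : ‖z‖ < 1) : mob (-a) (mob a z) = z := by
  have hne := den_ne ha hz
  have hw : mob a z * (1 - (starRingEnd ℂ) a * z) = z - a := div_mul_cancel₀ _ hne
  have hden2 : 1 - (starRingEnd ℂ) (-a) * mob a z
      = (1 - (starRingEnd ℂ) a * a) / (1 - (starRingEnd ℂ) a * z) := by
    rw [map_neg, neg_mul, sub_neg_eq_add]
    rw [eq_div_iff hne]
    linear_combination (starRingEnd ℂ) a * hw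
  have hnum : (1 : ℂ) - (starRingEnd ℂ) a * a ≠ 0 := by
    intro h
    have h1 : (1 : ℂ) = (starRingEnd ℂ) a * a := by linear_combination h
    have h2 : (1 : ℝ) = ‖(starRingEnd ℂ) a * a‖ := by rw [← h1]; simp
    rw [norm_mul] at h2
    nlinarith [norm_nonneg a, (RCLike.norm_conj a : ‖(starRingEnd ℂ) a‖ = ‖a‖)]
  have hden2ne : 1 - (starRingEnd ℂ) (-a) * mob a z ≠ 0 := by
    rw [hden2]; exact div_ne_zero hnum hne
  rw [mob, div_eq_iff hden2ne, hden2, sub_neg_eq_add, ← mul_div_assoc, eq_div_iff hne]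
  linear_combination hw

lemma mob_diff {a z : ℂ} (ha : ‖a‖ < 1) (hz : ‖z‖ < 1) :
    DifferentiableAt ℂ (mob a) z := by
  have hne := den_ne ha hz
  exact (differentiableAt_id.sub (differentiableAt_const a)).div
    ((differentiableAt_const _).sub ((differentiableAt_const _).mul differentiableAt_id)) hne

lemma schwarz_pick {f : ℂ → ℂ}
    (hd : ∀ z ∈ Metric.ball (0 : ℂ) 1, DifferentiableAt ℂ f z)
    (hm : ∀ z ∈ Metric.ball (0 : ℂ) 1, ‖f z‖ < 1)
    {w z : ℂ} (hw : ‖w‖ < 1) (hz : ‖z‖ < 1) :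
    ‖mob (f w) (f z)‖ ≤ ‖mob w z‖ := by
  have hball : ∀ u : ℂ, ‖u‖ < 1 ↔ u ∈ Metric.ball (0 : ℂ) 1 := by
    intro u; rw [mem_ball_zero_iff]
  set F : ℂ → ℂ := fun ζ => mob (f w) (f (mob (-w) ζ)) with hF
  have hnegw : ‖-w‖ < 1 := by rwa [norm_neg]
  have hfw : ‖f w‖ < 1 := hm w ((hball w).1 hw)
  have hmapsto : Set.MapsTo F (Metric.ball (0:ℂ) 1) (Metric.ball (0:ℂ) 1) := by
    intro ζ hζ
    rw [← hball] at hζ ⊢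
    exact mob_lt_one hfw (hm _ ((hball _).1 (mob_lt_one hnegw hζ)))
  have hFd : DifferentiableOn ℂ F (Metric.ball (0:ℂ) 1) := by
    intro ζ hζ
    rw [← hball] at hζ
    have h1 : DifferentiableAt ℂ (mob (-w)) ζ := mob_diff hnegw hζ
    have h1' : ‖mob (-w) ζ‖ < 1 := mob_lt_one hnegw hζ
    have h2 : DifferentiableAt ℂ f (mob (-w) ζ) := hd _ ((hball _).1 h1')
    have h3 : DifferentiableAt ℂ (mob (f w)) (f (mob (-w) ζ)) :=
      mob_diff hfw (hm _ ((hball _).1 h1'))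
    exact ((h3.comp _ h2).comp _ h1).differentiableWithinAt
  have hF0 : F 0 = 0 := by
    have : mob (-w) 0 = w := by
      simp [mob]
    rw [hF]; simp only [this]
    simp [mob]
  have hζ : ‖mob w z‖ < 1 := by
    exact mob_lt_one hw hz
  have := Complex.norm_le_norm_of_mapsTo_ball hFd (hmapsto.mono_right ball_subset_closedBall) hF0 hζ
  have hFval : F (mob w z) = mob (f w) (f z) := by
    rw [hF]; simp only [mob_inv hw hz]
  rw [hFval] at this
  simpa using this

lemma sp_normSq {f : ℂ → ℂ}
    (hd : ∀ z ∈ Metric.ball (0 : ℂ) 1, DifferentiableAt ℂ f z)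
    (hm : ∀ z ∈ Metric.ball (0 : ℂ) 1, ‖f z‖ < 1)
    {w z : ℂ} (hw : ‖w‖ < 1) (hz : ‖z‖ < 1) :
    (1 - normSq z) * (1 - normSq w) * normSq (1 - (starRingEnd ℂ) (f w) * f z)
      ≤ (1 - normSq (f z)) * (1 - normSq (f w)) * normSq (1 - (starRingEnd ℂ) w * z) := by
  have hfw : ‖f w‖ < 1 := hm w (mem_ball_zero_iff.mpr hw)
  have hfz : ‖f z‖ < 1 := hm z (mem_ball_zero_iff.mpr hz)
  have hS1 : 0 < normSq (1 - (starRingEnd ℂ) w * z) := normSq_pos.mpr (den_ne hw hz)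
  have hS2 : 0 < normSq (1 - (starRingEnd ℂ) (f w) * f z) := normSq_pos.mpr (den_ne hfw hfz)
  have h := schwarz_pick hd hm hw hz
  have h2 : ‖mob (f w) (f z)‖ * ‖mob (f w) (f z)‖ ≤ ‖mob w z‖ * ‖mob w z‖ :=
    mul_le_mul h h (norm_nonneg _) (norm_nonneg _)
  have hval : ∀ a b : ℂ, ‖mob a b‖ * ‖mob a b‖
      = normSq (b - a) / normSq (1 - (starRingEnd ℂ) a * b) := by
    intro a b
    rw [mob, norm_div, div_mul_div_comm]
    congr 1 <;> rw [Complex.normSq_eq_norm_sq, sq]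
  rw [hval, hval, div_le_div_iff₀ hS2 hS1] at h2
  have k1 := normSq_key w z
  have k2 := normSq_key (f w) (f z)
  nlinarith [h2, k1, k2]

lemma julia {f : ℂ → ℂ}
    (hd : ∀ z ∈ Metric.ball (0 : ℂ) 1, DifferentiableAt ℂ f z)
    (hm : ∀ z ∈ Metric.ball (0 : ℂ) 1, ‖f z‖ < 1)
    (r : ℕ → ℝ) (hr0 : ∀ n, 0 ≤ r n) (hr1 : ∀ n, r n < 1)
    (hrlim : Tendsto r atTop (nhds 1))
    (hflim : Tendsto (fun n => f ((r n : ℝ) : ℂ)) atTop (nhds 1))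
    {α : ℝ}
    (hα : Tendsto (fun n => (1 - normSq (f ((r n : ℝ) : ℂ))) / (1 - (r n) ^ 2)) atTop (nhds α))
    {z : ℂ} (hz : ‖z‖ < 1) :
    (1 - normSq z) * normSq (1 - f z) ≤ α * ((1 - normSq (f z)) * normSq (1 - z)) := by
  have hwn : ∀ n, ‖((r n : ℝ) : ℂ)‖ < 1 := by
    intro n
    rw [Complex.norm_real, Real.norm_eq_abs, _root_.abs_of_nonneg (hr0 n)]
    exact hr1 n
  -- pointwise inequality after division
  have q : ∀ n, (1 - normSq z) * normSq (1 - (starRingEnd ℂ) (f ((r n : ℝ) : ℂ)) * f z)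
      ≤ (1 - normSq (f z)) * ((1 - normSq (f ((r n : ℝ) : ℂ))) / (1 - (r n) ^ 2))
        * normSq (1 - ((r n : ℝ) : ℂ) * z) := by
    intro n
    have hpos : (0:ℝ) < 1 - (r n) ^ 2 := by nlinarith [hr0 n, hr1 n]
    have hcl := sp_normSq hd hm (hwn n) hz
    rw [Complex.conj_ofReal] at hcl
    have hns : normSq ((r n : ℝ) : ℂ) = (r n) ^ 2 := by
      rw [Complex.normSq_ofReal]; ring
    rw [hns] at hcl
    rw [mul_comm (1 - normSq (f z)) _, mul_assoc, div_mul_eq_mul_div, le_div_iff₀ hpos]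
    nlinarith [hcl]
  have hLlim : Tendsto (fun n => (1 - normSq z)
      * normSq (1 - (starRingEnd ℂ) (f ((r n : ℝ) : ℂ)) * f z)) atTop
      (nhds ((1 - normSq z) * normSq (1 - f z))) := by
    have h1 : Tendsto (fun n => 1 - (starRingEnd ℂ) (f ((r n : ℝ) : ℂ)) * f z) atTop
        (nhds (1 - f z)) := by
      have := ((Complex.continuous_conj.tendsto (1:ℂ)).comp hflim).mul_const (f z)
      simpa using (tendsto_const_nhds (x := (1:ℂ)) (f := atTop)).sub this
    exact (tendsto_const_nhds.mul (Complex.continuous_normSq.tendsto _ |>.comp h1))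
  have hRlim : Tendsto (fun n => (1 - normSq (f z))
      * ((1 - normSq (f ((r n : ℝ) : ℂ))) / (1 - (r n) ^ 2))
      * normSq (1 - ((r n : ℝ) : ℂ) * z)) atTop
      (nhds ((1 - normSq (f z)) * α * normSq (1 - z))) := by
    have h1 : Tendsto (fun n => 1 - ((r n : ℝ) : ℂ) * z) atTop (nhds (1 - z)) := by
      have := ((Complex.continuous_ofReal.tendsto (1:ℝ)).comp hrlim).mul_const z
      simpa using (tendsto_const_nhds (x := (1:ℂ)) (f := atTop)).sub this
    exact (tendsto_const_nhds.mul hα).mul (Complex.continuous_normSq.tendsto _ |>.comp h1)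
  have := le_of_tendsto_of_tendsto' hLlim hRlim q
  linarith [this]

lemma one_sub_ne_of_norm_lt {w : ℂ} (hw : ‖w‖ < 1) : (1 : ℂ) - w ≠ 0 := by
  intro h
  have : w = 1 := by linear_combination -h
  rw [this] at hw; simp at hw

lemma re_cayley {w : ℂ} (hw : ‖w‖ < 1) :
    ((1 + w) / (1 - w)).re = (1 - normSq w) / normSq (1 - w) := by
  rw [Complex.div_re, ← add_div]
  congr 1
  simp only [Complex.add_re, Complex.add_im, Complex.sub_re, Complex.sub_im, Complex.one_re,
    Complex.one_im, normSq_apply]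
  ring

/-- **Boundary Schwarz lemma of Burns and Krantz.** If `f` is a holomorphic self-map
of the open unit disk such that `f(z) = z + o(|1 − z|³)` as `z → 1` within the disk,
then `f` is the identity. -/
theorem burns_krantz (f : ℂ → ℂ)
    (hf_diff : ∀ z ∈ Metric.ball (0 : ℂ) 1, DifferentiableAt ℂ f z)
    (hf_maps : ∀ z ∈ Metric.ball (0 : ℂ) 1, ‖f z‖ < 1)
    (hlittleo : Tendsto (fun z : ℂ => (f z - z) / ((‖1 - z‖ ^ 3 : ℝ) : ℂ))
      (nhdsWithin 1 (Metric.ball (0 : ℂ) 1)) (nhds 0)) :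
    ∀ z ∈ Metric.ball (0 : ℂ) 1, f z = z := by
  have hball : ∀ u : ℂ, u ∈ Metric.ball (0 : ℂ) 1 ↔ ‖u‖ < 1 := fun u => mem_ball_zero_iff
  -- the auxiliary holomorphic function ε
  obtain ⟨ε, hε⟩ : ∃ ε : ℂ → ℂ, ε = fun z => (1 + f z) / (1 - f z) - (1 + z) / (1 - z) :=
    ⟨_, rfl⟩
  have hεdiff : ∀ z ∈ Metric.ball (0 : ℂ) 1, DifferentiableAt ℂ ε z := by
    intro z hz
    have h1 := one_sub_ne_of_norm_lt (hf_maps z hz)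
    have h2 := one_sub_ne_of_norm_lt ((hball z).1 hz)
    rw [hε]
    exact (((differentiableAt_const _).add (hf_diff z hz)).div
      ((differentiableAt_const _).sub (hf_diff z hz)) h1).sub
      (((differentiableAt_const _).add differentiableAt_id).div
      ((differentiableAt_const _).sub differentiableAt_id) h2)
  have hεform : ∀ z : ℂ, ‖z‖ < 1 → ‖f z‖ < 1 →
      ε z = 2 * (f z - z) / ((1 - f z) * (1 - z)) := by
    intro z hz hfz
    have h1 := one_sub_ne_of_norm_lt hfz
    have h2 := one_sub_ne_of_norm_lt hz
    rw [hε]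
    field_simp
    ring
  -- the radial sequence
  obtain ⟨r, hrdef⟩ : ∃ r : ℕ → ℝ, r = fun n : ℕ => 1 - 1 / ((n : ℝ) + 1) := ⟨_, rfl⟩
  have hr0 : ∀ n, 0 ≤ r n := by
    intro n
    have h1 : 1 / ((n : ℝ) + 1) ≤ 1 := by
      rw [div_le_one (by positivity)]; linarith [Nat.cast_nonneg (α := ℝ) n]
    simp only [hrdef]; linarith
  have hr1 : ∀ n, r n < 1 := by
    intro n
    have h1 : 0 < 1 / ((n : ℝ) + 1) := by positivity
    simp only [hrdef]; linarith
  have hrlim : Tendsto r atTop (nhds 1) := by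
    have h := tendsto_one_div_add_atTop_nhds_zero_nat (𝕜 := ℝ)
    rw [hrdef]
    simpa using (tendsto_const_nhds (x := (1:ℝ)) (f := atTop)).sub h
  have hcn : ∀ n, ‖((r n : ℝ) : ℂ)‖ < 1 := by
    intro n
    rw [Complex.norm_real, Real.norm_eq_abs, _root_.abs_of_nonneg (hr0 n)]
    exact hr1 n
  have hcmem : ∀ n, ((r n : ℝ) : ℂ) ∈ Metric.ball (0 : ℂ) 1 := fun n => (hball _).2 (hcn n)
  have hclim : Tendsto (fun n => ((r n : ℝ) : ℂ)) atTop (nhds (1 : ℂ)) := by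
    have := (Complex.continuous_ofReal.tendsto (1 : ℝ)).comp hrlim
    simpa [Function.comp_def] using this
  have hc1 : Tendsto (fun n => ((r n : ℝ) : ℂ)) atTop (nhdsWithin 1 (Metric.ball (0 : ℂ) 1)) :=
    tendsto_nhdsWithin_iff.mpr ⟨hclim, Eventually.of_forall hcmem⟩
  -- the little-o control sequence
  obtain ⟨t, htdef⟩ : ∃ t : ℕ → ℝ,
      t = fun n => ‖(f ((r n : ℝ) : ℂ) - ((r n : ℝ) : ℂ)) / ((‖1 - ((r n : ℝ) : ℂ)‖ ^ 3 : ℝ) : ℂ)‖ :=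
    ⟨_, rfl⟩
  have ht : Tendsto t atTop (nhds 0) := by
    rw [htdef]
    simpa using (hlittleo.comp hc1).norm
  have ht0 : ∀ n, 0 ≤ t n := by intro n; rw [htdef]; exact norm_nonneg _
  have hnormc : ∀ n, ‖1 - ((r n : ℝ) : ℂ)‖ = 1 - r n := by
    intro n
    have e : (1 : ℂ) - ((r n : ℝ) : ℂ) = ((1 - r n : ℝ) : ℂ) := by push_cast; ring
    rw [e, Complex.norm_real, Real.norm_eq_abs, _root_.abs_of_nonneg (by linarith [hr1 n])]
  have hdn : ∀ n, ‖f ((r n : ℝ) : ℂ) - ((r n : ℝ) : ℂ)‖ = t n * (1 - r n) ^ 3 := by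
    intro n
    have hXpos : (0:ℝ) < ‖1 - ((r n : ℝ) : ℂ)‖ ^ 3 := by
      rw [hnormc n]; have h := hr1 n; exact pow_pos (by linarith) 3
    have hpow : (0:ℝ) < (1 - r n) ^ 3 := pow_pos (by linarith [hr1 n]) 3
    simp only [htdef]
    rw [norm_div, Complex.norm_real, Real.norm_eq_abs, _root_.abs_of_pos hXpos, hnormc n,
      div_mul_cancel₀ _ (ne_of_gt hpow)]
  -- f → 1 along the radial sequence
  have hfc1 : Tendsto (fun n => f ((r n : ℝ) : ℂ)) atTop (nhds (1 : ℂ)) := by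
    have hsub : Tendsto (fun n => f ((r n : ℝ) : ℂ) - ((r n : ℝ) : ℂ)) atTop (nhds 0) := by
      refine squeeze_zero_norm (fun n => ?_) ht
      rw [hdn n]
      have h1 := hr0 n; have h2 := hr1 n
      have e1 : (1 - r n) ^ 3 ≤ 1 := by nlinarith [sq_nonneg (1 - r n)]
      exact mul_le_of_le_one_right (ht0 n) e1
    simpa using hsub.add hclim
  -- the α = 1 limit for f
  have hα1 : Tendsto (fun n => (1 - normSq (f ((r n : ℝ) : ℂ))) / (1 - (r n) ^ 2)) atTop
      (nhds 1) := by
    have hbd : ∀ n, ‖(1 - normSq (f ((r n : ℝ) : ℂ))) / (1 - (r n) ^ 2) - 1‖ ≤ 2 * t n := by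
      intro n
      have hpos : (0:ℝ) < 1 - (r n) ^ 2 := by nlinarith [hr0 n, hr1 n]
      have hm : ‖f ((r n : ℝ) : ℂ)‖ < 1 := hf_maps _ (hcmem n)
      have hmr : |‖f ((r n : ℝ) : ℂ)‖ - r n| ≤ t n * (1 - r n) ^ 3 := by
        have h1 := abs_norm_sub_norm_le (f ((r n : ℝ) : ℂ)) ((r n : ℝ) : ℂ)
        have h2 : ‖((r n : ℝ) : ℂ)‖ = r n := by
          rw [Complex.norm_real, Real.norm_eq_abs, _root_.abs_of_nonneg (hr0 n)]
        rw [h2] at h1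
        rw [← hdn n]; exact h1
      have hns : normSq (f ((r n : ℝ) : ℂ)) = ‖f ((r n : ℝ) : ℂ)‖ ^ 2 := by
        rw [Complex.normSq_eq_norm_sq]
      rw [Real.norm_eq_abs, div_sub_one (ne_of_gt hpos), abs_div,
        _root_.abs_of_pos hpos, div_le_iff₀ hpos, hns]
      have h3 := hr0 n; have h4 := hr1 n; have h5 := ht0 n
      have h6 : ‖f ((r n : ℝ) : ℂ)‖ + r n ≤ 2 := by linarith
      have h7 : |‖f ((r n : ℝ) : ℂ)‖ ^ 2 - (r n) ^ 2| ≤ 2 * (t n * (1 - r n) ^ 3) := by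
        have e : ‖f ((r n : ℝ) : ℂ)‖ ^ 2 - (r n) ^ 2
            = (‖f ((r n : ℝ) : ℂ)‖ - r n) * (‖f ((r n : ℝ) : ℂ)‖ + r n) := by ring
        rw [e, abs_mul]
        have h8 : |‖f ((r n : ℝ) : ℂ)‖ + r n| ≤ 2 := by
          rw [_root_.abs_of_nonneg (by linarith [norm_nonneg (f ((r n : ℝ) : ℂ))])]; exact h6
        calc |‖f ((r n : ℝ) : ℂ)‖ - r n| * |‖f ((r n : ℝ) : ℂ)‖ + r n|
            ≤ (t n * (1 - r n) ^ 3) * 2 := by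
              exact mul_le_mul hmr h8 (abs_nonneg _)
                (mul_nonneg h5 (pow_nonneg (by linarith) 3))
          _ = 2 * (t n * (1 - r n) ^ 3) := by ring
      have h9 : |1 - ‖f ((r n : ℝ) : ℂ)‖ ^ 2 - (1 - (r n) ^ 2)|
          = |‖f ((r n : ℝ) : ℂ)‖ ^ 2 - (r n) ^ 2| := by
        rw [abs_sub_comm]; congr 1; ring
      rw [h9]
      have h10 : (1 - r n) ^ 3 ≤ 1 - (r n) ^ 2 := by
        nlinarith [mul_le_mul_of_nonneg_left (show (1 - r n) ^ 2 ≤ 1 + r n by nlinarith)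
          (show (0:ℝ) ≤ 1 - r n by linarith)]
      nlinarith [h7, h10]
    have hz : Tendsto (fun n => (1 - normSq (f ((r n : ℝ) : ℂ))) / (1 - (r n) ^ 2) - 1) atTop
        (nhds 0) := by
      refine squeeze_zero_norm hbd ?_
      simpa using ht.const_mul 2
    simpa using hz.add_const 1
  -- Julia's lemma applied to f : Re ε ≥ 0 on the ball
  have hRe : ∀ z ∈ Metric.ball (0 : ℂ) 1, 0 ≤ (ε z).re := by
    intro z hz
    have hzn : ‖z‖ < 1 := (hball z).1 hz
    have hfzn : ‖f z‖ < 1 := hf_maps z hz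
    have hj := julia hf_diff hf_maps r hr0 hr1 hrlim hfc1 hα1 hzn
    have hp1 : 0 < normSq (1 - f z) := normSq_pos.mpr (one_sub_ne_of_norm_lt hfzn)
    have hp2 : 0 < normSq (1 - z) := normSq_pos.mpr (one_sub_ne_of_norm_lt hzn)
    have he : (ε z).re = ((1 + f z) / (1 - f z)).re - ((1 + z) / (1 - z)).re := by
      rw [hε]; exact Complex.sub_re _ _
    rw [he, re_cayley hfzn, re_cayley hzn, sub_nonneg, div_le_div_iff₀ hp2 hp1]
    nlinarith [hj]
  -- eventual bound on ε along the radial sequence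
  have hev : ∀ᶠ n in atTop, ‖ε ((r n : ℝ) : ℂ)‖ ≤ 8 * t n * (1 - r n) := by
    filter_upwards [ht.eventually_lt_const (show (0:ℝ) < 1/2 by norm_num)] with n htn
    have h3 := hr0 n; have h4 := hr1 n; have h5 := ht0 n
    have hfz : ‖f ((r n : ℝ) : ℂ)‖ < 1 := hf_maps _ (hcmem n)
    have k1 : (0:ℝ) ≤ 1 - r n := by linarith
    have hlow : (1 - r n) / 2 ≤ ‖1 - f ((r n : ℝ) : ℂ)‖ := by
      have ha : ‖1 - ((r n : ℝ) : ℂ)‖ - ‖f ((r n : ℝ) : ℂ) - ((r n : ℝ) : ℂ)‖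
          ≤ ‖1 - f ((r n : ℝ) : ℂ)‖ := by
        have h := norm_sub_norm_le (1 - ((r n : ℝ) : ℂ)) (f ((r n : ℝ) : ℂ) - ((r n : ℝ) : ℂ))
        have e : (1 - ((r n : ℝ) : ℂ)) - (f ((r n : ℝ) : ℂ) - ((r n : ℝ) : ℂ))
            = 1 - f ((r n : ℝ) : ℂ) := by ring
        rwa [e] at h
      rw [hnormc n, hdn n] at ha
      have e2 : t n * (1 - r n) ^ 3 ≤ (1/2) * (1 - r n) := by
        have k2 : (1 - r n) ^ 2 ≤ 1 := by nlinarith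
        calc t n * (1 - r n) ^ 3 = (t n * (1 - r n)) * (1 - r n) ^ 2 := by ring
          _ ≤ (t n * (1 - r n)) * 1 := mul_le_mul_of_nonneg_left k2 (mul_nonneg h5 k1)
          _ = t n * (1 - r n) := by ring
          _ ≤ (1/2) * (1 - r n) := mul_le_mul_of_nonneg_right htn.le k1
      linarith
    rw [hεform _ (hcn n) hfz, norm_div]
    have hnum : ‖(2:ℂ) * (f ((r n : ℝ) : ℂ) - ((r n : ℝ) : ℂ))‖ = 2 * (t n * (1 - r n) ^ 3) := by
      rw [norm_mul, hdn n]; norm_num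
    have hden2 : ‖(1 - f ((r n : ℝ) : ℂ)) * (1 - ((r n : ℝ) : ℂ))‖
        = ‖1 - f ((r n : ℝ) : ℂ)‖ * (1 - r n) := by
      rw [norm_mul, hnormc n]
    rw [hnum, hden2]
    have hdpos : 0 < ‖1 - f ((r n : ℝ) : ℂ)‖ * (1 - r n) :=
      mul_pos (by linarith) (by linarith)
    rw [div_le_iff₀ hdpos]
    have h8nn : (0:ℝ) ≤ 8 * t n * (1 - r n) * (1 - r n) :=
      mul_nonneg (mul_nonneg (by linarith) (by linarith)) (by linarith)
    nlinarith [mul_le_mul_of_nonneg_left hlow h8nn]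
  have h1r : Tendsto (fun n => 1 - r n) atTop (nhds 0) := by
    simpa using (tendsto_const_nhds (x := (1:ℝ)) (f := atTop)).sub hrlim
  have hεlim : Tendsto (fun n => ε ((r n : ℝ) : ℂ)) atTop (nhds 0) := by
    refine squeeze_zero_norm' hev ?_
    simpa using (ht.const_mul 8).mul h1r
  -- the exponential auxiliary function
  obtain ⟨E, hE⟩ : ∃ E : ℂ → ℂ, E = fun z => Complex.exp (-ε z) := ⟨_, rfl⟩
  have hEd : ∀ z ∈ Metric.ball (0 : ℂ) 1, DifferentiableAt ℂ E z := by
    intro z hz; rw [hE]; exact ((hεdiff z hz).neg).cexp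
  have hEnorm : ∀ z : ℂ, ‖E z‖ = Real.exp (-(ε z).re) := by
    intro z
    rw [hE]
    simp [Complex.norm_exp]
  -- there is a point where Re ε vanishes
  have hex : ∃ z₀ ∈ Metric.ball (0 : ℂ) 1, (ε z₀).re = 0 := by
    by_contra hcon
    push_neg at hcon
    have hpos : ∀ z ∈ Metric.ball (0 : ℂ) 1, 0 < (ε z).re :=
      fun z hz => lt_of_le_of_ne (hRe z hz) (Ne.symm (hcon z hz))
    have hElt : ∀ z ∈ Metric.ball (0 : ℂ) 1, ‖E z‖ < 1 := by
      intro z hz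
      rw [hEnorm z]
      exact Real.exp_lt_one_iff.mpr (by linarith [hpos z hz])
    have hE1 : Tendsto (fun n => E ((r n : ℝ) : ℂ)) atTop (nhds (1 : ℂ)) := by
      have h0 : Tendsto (fun n => -ε ((r n : ℝ) : ℂ)) atTop (nhds 0) := by
        simpa using hεlim.neg
      have h2 := (Complex.continuous_exp.tendsto (0 : ℂ)).comp h0
      rw [hE]
      simpa [Complex.exp_zero, Function.comp_def] using h2
    have hEα : Tendsto (fun n => (1 - normSq (E ((r n : ℝ) : ℂ))) / (1 - (r n) ^ 2)) atTop
        (nhds 0) := by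
      have hnsE : ∀ n, normSq (E ((r n : ℝ) : ℂ))
          = Real.exp (-2 * (ε ((r n : ℝ) : ℂ)).re) := by
        intro n
        have h1 : normSq (E ((r n : ℝ) : ℂ)) = ‖E ((r n : ℝ) : ℂ)‖ ^ 2 := by
          rw [Complex.normSq_eq_norm_sq]
        rw [h1, hEnorm, sq, ← Real.exp_add]
        congr 1
        ring
      refine tendsto_of_tendsto_of_tendsto_of_le_of_le' tendsto_const_nhds
        (show Tendsto (fun n => 16 * t n) atTop (nhds 0) by simpa using ht.const_mul 16) ?_ ?_
      · refine Eventually.of_forall fun n => ?_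
        have hx : 0 ≤ (ε ((r n : ℝ) : ℂ)).re := hRe _ (hcmem n)
        have hpos2 : (0:ℝ) < 1 - (r n) ^ 2 := by nlinarith [hr0 n, hr1 n]
        have hle1 : Real.exp (-2 * (ε ((r n : ℝ) : ℂ)).re) ≤ 1 := by
          have := Real.exp_le_exp.mpr (show -2 * (ε ((r n : ℝ) : ℂ)).re ≤ 0 by linarith)
          simpa using this
        exact div_nonneg (by rw [hnsE n]; linarith) (le_of_lt hpos2)
      · filter_upwards [hev] with n hn
        have hx : 0 ≤ (ε ((r n : ℝ) : ℂ)).re := hRe _ (hcmem n)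
        have hxle : (ε ((r n : ℝ) : ℂ)).re ≤ 8 * t n * (1 - r n) := by
          refine le_trans (Complex.re_le_norm _) ?_
          exact hn
        have h3 := hr0 n; have h4 := hr1 n; have h5 := ht0 n
        have hpos2 : (0:ℝ) < 1 - (r n) ^ 2 := by nlinarith
        rw [hnsE n, div_le_iff₀ hpos2]
        have hexp : 1 - Real.exp (-2 * (ε ((r n : ℝ) : ℂ)).re)
            ≤ 2 * (ε ((r n : ℝ) : ℂ)).re := by
          have := Real.add_one_le_exp (-2 * (ε ((r n : ℝ) : ℂ)).re)
          linarith
        have h16 : 16 * (t n * (1 - r n)) ≤ 16 * (t n * (1 - (r n) ^ 2)) := by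
          have : t n * (1 - r n) ≤ t n * (1 - (r n) ^ 2) :=
            mul_le_mul_of_nonneg_left (by nlinarith) h5
          linarith
        nlinarith [hexp, hxle, h16]
    have hjE := julia hEd hElt r hr0 hr1 hrlim hE1 hEα (show ‖(0:ℂ)‖ < 1 by norm_num)
    simp only [map_zero, sub_zero, normSq_one, zero_mul, mul_one, one_mul] at hjE
    have hle : normSq (1 - E 0) ≤ 0 := by linarith [hjE, normSq_nonneg (1 - E 0)]
    have hE01 : E 0 = 1 := by
      have h1 := le_antisymm hle (normSq_nonneg _)
      have h2 := normSq_eq_zero.mp h1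
      linear_combination -h2
    have hc := hElt 0 (Metric.mem_ball_self one_pos)
    rw [hE01] at hc
    simp at hc
  -- the maximum modulus argument
  obtain ⟨z₀, hz₀, hre0⟩ := hex
  have hmax : IsMaxOn (norm ∘ E) (Metric.ball (0:ℂ) 1) z₀ := by
    refine isMaxOn_iff.mpr fun z hz => ?_
    simp only [Function.comp_apply]
    rw [hEnorm z, hEnorm z₀, hre0]
    have hzle : -(ε z).re ≤ -0 := by simp; exact hRe z hz
    exact Real.exp_le_exp.mpr hzle
  have hEq := Complex.eqOn_of_isPreconnected_of_isMaxOn_norm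
    (convex_ball (0:ℂ) 1).isPreconnected isOpen_ball
    (fun z hz => (hEd z hz).differentiableWithinAt) hz₀ hmax
  have hder0 : ∀ z ∈ Metric.ball (0:ℂ) 1, deriv ε z = 0 := by
    intro z hz
    have hfe : E =ᶠ[nhds z] fun _ => E z₀ := by
      filter_upwards [isOpen_ball.mem_nhds hz] with w hw using hEq hw
    have h1 : deriv E z = 0 := by rw [hfe.deriv_eq]; exact deriv_const _ _
    have h2 : HasDerivAt E (Complex.exp (-ε z) * -(deriv ε z)) z := by
      rw [hE]; exact ((hεdiff z hz).hasDerivAt.neg).cexp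
    rw [h2.deriv] at h1
    rcases mul_eq_zero.mp h1 with h | h
    · exact absurd h (Complex.exp_ne_zero _)
    · simpa using h
  have hconst : ∀ z ∈ Metric.ball (0:ℂ) 1, ε z = ε 0 := by
    intro z hz
    refine Convex.is_const_of_fderivWithin_eq_zero (convex_ball (0:ℂ) 1)
      (fun w hw => (hεdiff w hw).differentiableWithinAt) (fun w hw => ?_) hz
      (Metric.mem_ball_self one_pos)
    rw [fderivWithin_of_isOpen isOpen_ball hw]
    have h := (hεdiff w hw).hasDerivAt
    rw [hder0 w hw] at h
    have h2 := h.hasFDerivAt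
    rw [h2.fderiv]
    ext u
    simp
  have hε00 : ε 0 = 0 := by
    have h1 : Tendsto (fun n : ℕ => ε ((r n : ℝ) : ℂ)) atTop (nhds (ε 0)) := by
      have he : (fun n : ℕ => ε ((r n : ℝ) : ℂ)) = fun _ => ε 0 :=
        funext fun n => hconst _ (hcmem n)
      rw [he]; exact tendsto_const_nhds
    exact tendsto_nhds_unique h1 hεlim
  intro z hz
  have hz1 : ‖z‖ < 1 := (hball z).1 hz
  have hfz1 : ‖f z‖ < 1 := hf_maps z hz
  have h0 : ε z = 0 := by rw [hconst z hz, hε00]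
  rw [hεform z hz1 hfz1] at h0
  have hden : (1 - f z) * (1 - z) ≠ 0 :=
    mul_ne_zero (one_sub_ne_of_norm_lt hfz1) (one_sub_ne_of_norm_lt hz1)
  have h2 : (2:ℂ) * (f z - z) = 0 := by
    rcases div_eq_zero_iff.mp h0 with h | h
    · exact h
    · exact absurd h hden
  have h3 : f z - z = 0 := by
    rcases mul_eq_zero.mp h2 with h | h
    · norm_num at h
    · exact h
  linear_combination h3
end
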